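/- arXiv:2501.04859 — 7 statements merged into one kernel-verified Lean document; each statement's English description precedes it below -/
import Mathlib

section
/- Let a be a pivot with a ∈ {p_1,…,p_n}. If the system mod-IP(a) has a feasible solution x ∈ {0,1}^{m×n}, then the Multiway Partitioning instance is feasible, i.e., there exists a partition A_1 ∪̇ ⋯ ∪̇ A_m of {1,…,n} with ∑_{j∈A_i} p_j = T_i for every i ∈ {1,…,m}. -/
/-- Feasibility of a Multiway Partitioning instance: a partition
`A_1 ∪̇ ⋯ ∪̇ A_m` of the jobs (encoded by an assignment `σ`) with
`∑_{j ∈ A_i} p_j = T_i` for every machine `i`. -/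
def MultiwayFeasible (n m : ℕ) (p : Fin n → ℕ) (T : Fin m → ℕ) : Prop :=
  ∃ σ : Fin n → Fin m,
    ∀ i : Fin m, ∑ j ∈ Finset.univ.filter (fun j => σ j = i), p j = T i

/-- Feasibility of the system mod-IP(a) in binary variables `x i j`.
Small machines are those with `T i < pmax ^ 4`, big machines the others. -/
def ModIPFeasible (n m : ℕ) (p : Fin n → ℕ) (T : Fin m → ℕ) (pmax a : ℕ) : Prop :=
  ∃ x : Fin m → Fin n → ℕ,
    (∀ i j, x i j ≤ 1) ∧
    (∀ i : Fin m, T i < pmax ^ 4 → ∑ j, p j * x i j = T i) ∧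
    (∀ i : Fin m, pmax ^ 4 ≤ T i → ∑ j, p j * x i j ≡ T i [MOD a]) ∧
    (pmax ^ 2 * (Finset.univ.filter (fun i : Fin m => pmax ^ 4 ≤ T i)).card ≤
      ∑ j ∈ Finset.univ.filter (fun j => p j = a),
        ∑ i ∈ Finset.univ.filter (fun i : Fin m => pmax ^ 4 ≤ T i), x i j) ∧
    (∀ j : Fin n, ∑ i, x i j = 1)

/-!
Read the solution of mod-IP(a) as an assignment `σ` of jobs to machines: it is exact on the small
machines, exact modulo `a` on the big ones, and the big machines hold on average at least
`pmax ^ 2` pivot jobs (jobs of size `a`). Two phases of moves between big machines repair it; each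
terminates because the total excess of the loads over the targets on big machines drops.

While a big machine `i` has non-pivot load above `T i ≥ (2a - 1)·pmax`, it holds at least `2a - 1`
non-pivot jobs, so by Erdős–Ginzburg–Ziv `a` of them have a total `s ≤ a·pmax` divisible by `a`.
Since the big machines have the right total load and many pivot jobs, averaging gives a big machine
`k` with non-pivot load at most `T k - a·pmax`; moving the `a` jobs to `k` keeps every congruence.

Once no big machine has too much non-pivot load, the gaps `T i - load i` are multiples of `a` summing
to zero, and an overloaded machine must hold a pivot job: move it to an underloaded one.
-/

namespace MultiwayPartitioning

open Finset

variable {ι κ : Type*} [DecidableEq κ]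

lemma exists_eq_ite_of_sum_eq_one [Fintype κ] {x : κ → ι → ℕ} (hcol : ∀ j, ∑ i, x i j = 1) :
    ∃ σ : ι → κ, x = fun i j => if σ j = i then 1 else 0 := by
  have hnz (j : ι) : ∃ i, x i j ≠ 0 := by
    obtain ⟨i, -, hi⟩ := exists_ne_zero_of_sum_ne_zero (hcol j ▸ one_ne_zero)
    exact ⟨i, hi⟩
  choose σ hσ using hnz
  refine ⟨σ, funext₂ fun i j => ?_⟩
  have hσj := hσ j
  split_ifs with hij
  · subst hij
    have := (single_le_sum (fun i _ => Nat.zero_le (x i j)) (mem_univ (σ j))).trans (hcol j).le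
    omega
  · have : x (σ j) j + x i j ≤ 1 := by
      rw [← hcol j, ← sum_pair (f := fun i => x i j) hij]
      exact sum_le_sum_of_subset (subset_univ _)
    omega

variable [Fintype ι]

def load (w : ι → ℕ) (σ : ι → κ) (i : κ) : ℕ :=
  ∑ j ∈ univ.filter (fun j => σ j = i), w j

lemma sum_load [Fintype κ] (w : ι → ℕ) (σ : ι → κ) : ∑ i, load w σ i = ∑ j, w j :=
  sum_fiberwise univ σ w

lemma sum_mul_ite_eq_load (w : ι → ℕ) (σ : ι → κ) (i : κ) :
    ∑ j, w j * (if σ j = i then 1 else 0) = load w σ i := by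
  simp [load, sum_filter]

def excess (w : ι → ℕ) (T : κ → ℕ) (B : Finset κ) (σ : ι → κ) : ℕ :=
  ∑ i ∈ B, (load w σ i - T i)

def nonpivot (p : ι → ℕ) (a : ℕ) (j : ι) : ℕ := if p j = a then 0 else p j

def pivot (p : ι → ℕ) (a : ℕ) (j : ι) : ℕ := if p j = a then 1 else 0

lemma load_eq_nonpivot_add_pivot (p : ι → ℕ) (a : ℕ) (σ : ι → κ) (i : κ) :
    load p σ i = load (nonpivot p a) σ i + a * load (pivot p a) σ i := by
  rw [load, load, load, mul_sum, ← sum_add_distrib]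
  refine sum_congr rfl fun j _ => ?_
  by_cases hj : p j = a <;> simp [nonpivot, pivot, hj]

lemma load_nonpivot_eq_sum (p : ι → ℕ) (a : ℕ) (σ : ι → κ) (i : κ) :
    load (nonpivot p a) σ i = ∑ j ∈ univ.filter (fun j => σ j = i ∧ p j ≠ a), p j := by
  rw [load, sum_filter, sum_filter]
  refine sum_congr rfl fun j _ => ?_
  by_cases hj : p j = a <;> simp [nonpivot, hj]

lemma sum_filter_sum_ite_eq_sum_load_pivot (p : ι → ℕ) (a : ℕ) (σ : ι → κ) (B : Finset κ) :
    ∑ j ∈ univ.filter (fun j => p j = a), ∑ i ∈ B, (if σ j = i then 1 else 0) =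
      ∑ i ∈ B, load (pivot p a) σ i := by
  rw [sum_comm]
  refine sum_congr rfl fun i _ => ?_
  simp only [load, pivot, sum_boole, Nat.cast_id]
  congr 1
  ext j
  simp [and_comm]

/-- Constraints (1) and (2) of mod-IP(a) for the assignment `σ`, with `B` the big machines. -/
def IsModAssignment (p : ι → ℕ) (T : κ → ℕ) (B : Finset κ) (a : ℕ) (σ : ι → κ) : Prop :=
  (∀ i ∉ B, load p σ i = T i) ∧ ∀ i ∈ B, load p σ i ≡ T i [MOD a]

variable {p : ι → ℕ} {T : κ → ℕ} {B : Finset κ} {a : ℕ} {σ : ι → κ}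

lemma IsModAssignment.sum_load_eq [Fintype κ] (hsum : ∑ j, p j = ∑ i, T i)
    (h : IsModAssignment p T B a σ) : ∑ i ∈ B, load p σ i = ∑ i ∈ B, T i := by
  have hcompl : ∑ i ∈ Bᶜ, load p σ i = ∑ i ∈ Bᶜ, T i :=
    sum_congr rfl fun i hi => h.1 i (mem_compl.mp hi)
  have htotal := sum_load p σ
  rw [hsum, ← sum_add_sum_compl B, ← sum_add_sum_compl B T, hcompl] at htotal
  omega

lemma exists_nonpivot_load_add_le [Fintype κ] (hsum : ∑ j, p j = ∑ i, T i)
    (h : IsModAssignment p T B a σ) {c : ℕ} (hpiv : c * #B ≤ ∑ i ∈ B, load (pivot p a) σ i)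
    (hB : B.Nonempty) : ∃ k ∈ B, load (nonpivot p a) σ k + a * c ≤ T k := by
  by_contra! hlt
  have hsumlt := sum_lt_sum_of_nonempty hB hlt
  rw [sum_add_distrib, sum_const, smul_eq_mul, ← h.sum_load_eq hsum] at hsumlt
  have hload : ∑ i ∈ B, load p σ i =
      ∑ i ∈ B, load (nonpivot p a) σ i + a * ∑ i ∈ B, load (pivot p a) σ i := by
    rw [mul_sum, ← sum_add_distrib]
    exact sum_congr rfl fun i _ => load_eq_nonpivot_add_pivot p a σ i
  have : a * (c * #B) ≤ a * ∑ i ∈ B, load (pivot p a) σ i := Nat.mul_le_mul_left a hpiv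
  nlinarith

variable [DecidableEq ι]

def move (σ : ι → κ) (S : Finset ι) (k : κ) : ι → κ :=
  fun j => if j ∈ S then k else σ j

variable {w : ι → ℕ} {S : Finset ι} {i k : κ}

lemma load_move_add (hS : ∀ j ∈ S, σ j = i) (l : κ) :
    load w (move σ S k) l + (if l = i then ∑ j ∈ S, w j else 0) =
      load w σ l + if l = k then ∑ j ∈ S, w j else 0 := by
  have hsrc : (if l = i then ∑ j ∈ S, w j else 0) = ∑ j ∈ S, if σ j = l then w j else 0 := by
    split_ifs with h
    · exact sum_congr rfl fun j hj => by simp [hS j hj, h]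
    · exact (sum_eq_zero fun j hj => by simp [hS j hj, Ne.symm h]).symm
  have htgt : (if l = k then ∑ j ∈ S, w j else 0) =
      ∑ j ∈ S, if move σ S k j = l then w j else 0 := by
    split_ifs with h
    · exact sum_congr rfl fun j hj => by simp [move, hj, h]
    · exact (sum_eq_zero fun j hj => by simp [move, hj, Ne.symm h]).symm
  have hout : ∑ j ∈ Sᶜ, (if move σ S k j = l then w j else 0) =
      ∑ j ∈ Sᶜ, if σ j = l then w j else 0 :=
    sum_congr rfl fun j hj => by simp [move, mem_compl.mp hj]
  rw [hsrc, htgt, load, load, sum_filter, sum_filter, ← sum_add_sum_compl S,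
    ← sum_add_sum_compl S (fun j => if σ j = l then w j else 0), hout]
  ring

lemma load_move_of_forall_eq_zero (hS : ∀ j ∈ S, w j = 0) (l : κ) :
    load w (move σ S k) l = load w σ l := by
  rw [load, load, sum_filter, sum_filter]
  refine sum_congr rfl fun j _ => ?_
  by_cases hj : j ∈ S <;> simp [move, hj, hS]

lemma excess_move_lt (hS : ∀ j ∈ S, σ j = i) (hi : i ∈ B) (hpos : 0 < ∑ j ∈ S, w j)
    (hTi : T i < load w σ i) (hTk : load w σ k + ∑ j ∈ S, w j ≤ T k) :
    excess w T B (move σ S k) < excess w T B σ := by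
  have hik : i ≠ k := by rintro rfl; omega
  refine sum_lt_sum (fun l _ => ?_) ⟨i, hi, ?_⟩
  · have key := load_move_add (w := w) (k := k) hS l
    by_cases hli : l = i
    · subst hli; rw [if_pos rfl, if_neg hik] at key; omega
    by_cases hlk : l = k
    · subst hlk; rw [if_neg hli, if_pos rfl] at key; omega
    · rw [if_neg hli, if_neg hlk] at key; omega
  · have key := load_move_add (w := w) (k := k) hS i
    rw [if_pos rfl, if_neg hik] at key
    omega

lemma IsModAssignment.move_of_dvd (h : IsModAssignment p T B a σ) (hS : ∀ j ∈ S, σ j = i)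
    (hi : i ∈ B) (hk : k ∈ B) (hdvd : a ∣ ∑ j ∈ S, p j) :
    IsModAssignment p T B a (move σ S k) := by
  have hzero (c : Prop) [Decidable c] : (if c then ∑ j ∈ S, p j else 0) ≡ 0 [MOD a] := by
    split_ifs
    · exact Nat.modEq_zero_iff_dvd.mpr hdvd
    · rfl
  refine ⟨fun l hl => ?_, fun l hl => ?_⟩
  · have key := load_move_add (w := p) (k := k) hS l
    rw [if_neg (ne_of_mem_of_not_mem hi hl).symm, if_neg (ne_of_mem_of_not_mem hk hl).symm] at key
    simpa [h.1 l hl] using key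
  · calc load p (move σ S k) l
        ≡ load p (move σ S k) l + if l = i then ∑ j ∈ S, p j else 0 [MOD a] :=
          (Nat.ModEq.add_left _ (hzero _)).symm
      _ = load p σ l + if l = k then ∑ j ∈ S, p j else 0 := load_move_add hS l
      _ ≡ load p σ l + 0 [MOD a] := Nat.ModEq.add_left _ (hzero _)
      _ ≡ T l [MOD a] := h.2 l hl

variable [Fintype κ]

lemma exists_nonpivot_move {pmax : ℕ} (hp : ∀ j, 0 < p j) (hpmax : ∀ j, p j ≤ pmax) (ha : 0 < a)
    (hT : ∀ i ∈ B, (2 * a - 1) * pmax ≤ T i) (hsum : ∑ j, p j = ∑ i, T i)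
    (h : IsModAssignment p T B a σ) (hpiv : pmax * #B ≤ ∑ i ∈ B, load (pivot p a) σ i)
    (hi : i ∈ B) (hTi : T i < load (nonpivot p a) σ i) :
    ∃ σ', IsModAssignment p T B a σ' ∧ pmax * #B ≤ ∑ i ∈ B, load (pivot p a) σ' i ∧
      excess (nonpivot p a) T B σ' < excess (nonpivot p a) T B σ := by
  set J := univ.filter (fun j => σ j = i ∧ p j ≠ a)
  have hJ : 2 * a - 1 ≤ #J := by
    have : load (nonpivot p a) σ i ≤ #J * pmax := by
      rw [load_nonpivot_eq_sum]
      simpa using sum_le_card_nsmul J p pmax fun j _ => hpmax j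
    exact (Nat.lt_of_mul_lt_mul_right ((hT i hi).trans_lt (hTi.trans_le this))).le
  obtain ⟨S, hSJ, hScard, hSdvd⟩ := Int.erdos_ginzburg_ziv (fun j => (p j : ℤ)) hJ
  replace hSdvd : a ∣ ∑ j ∈ S, p j := by exact_mod_cast hSdvd
  have hSi : ∀ j ∈ S, σ j = i ∧ p j ≠ a := fun j hj => by simpa [J] using hSJ hj
  have hSnonpivot : ∑ j ∈ S, nonpivot p a j = ∑ j ∈ S, p j :=
    sum_congr rfl fun j hj => if_neg (hSi j hj).2
  have hSle : ∑ j ∈ S, p j ≤ a * pmax := by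
    simpa [hScard] using sum_le_card_nsmul S p pmax fun j _ => hpmax j
  have hSpos : 0 < ∑ j ∈ S, p j := sum_pos (fun j _ => hp j) (card_pos.mp (hScard ▸ ha))
  obtain ⟨k, hk, hTk⟩ := exists_nonpivot_load_add_le hsum h hpiv ⟨i, hi⟩
  have hpivot : ∀ l, load (pivot p a) (move σ S k) l = load (pivot p a) σ l :=
    load_move_of_forall_eq_zero fun j hj => if_neg (hSi j hj).2
  refine ⟨move σ S k, h.move_of_dvd (fun j hj => (hSi j hj).1) hi hk hSdvd, by simpa [hpivot],
    excess_move_lt (fun j hj => (hSi j hj).1) hi (hSnonpivot ▸ hSpos) hTi (by omega)⟩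

lemma exists_pivot_move (ha : 0 < a) (hsum : ∑ j, p j = ∑ i, T i)
    (h : IsModAssignment p T B a σ) (hnp : ∀ i ∈ B, load (nonpivot p a) σ i ≤ T i)
    (hi : i ∈ B) (hTi : T i < load p σ i) :
    ∃ σ', IsModAssignment p T B a σ' ∧ (∀ i ∈ B, load (nonpivot p a) σ' i ≤ T i) ∧
      excess p T B σ' < excess p T B σ := by
  obtain ⟨k, hk, hTk⟩ : ∃ k ∈ B, load p σ k < T k := by
    by_contra! hge
    exact (sum_lt_sum hge ⟨i, hi, hTi⟩).ne (h.sum_load_eq hsum).symm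
  obtain ⟨j, hj, hpj⟩ : ∃ j ∈ univ.filter (fun j => σ j = i), pivot p a j ≠ 0 := by
    refine exists_ne_zero_of_sum_ne_zero fun h0 => ?_
    have hsplit := load_eq_nonpivot_add_pivot p a σ i
    rw [show load (pivot p a) σ i = 0 from h0, mul_zero, add_zero] at hsplit
    exact (hnp i hi).not_gt (hsplit ▸ hTi)
  have hpj : p j = a := by by_contra hne; simp [pivot, hne] at hpj
  have hSi : ∀ l ∈ ({j} : Finset ι), σ l = i := by simpa using hj
  refine ⟨move σ {j} k, h.move_of_dvd hSi hi hk (by simp [hpj]), fun l hl => ?_,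
    excess_move_lt hSi hi (by simp [hpj, ha]) hTi
      (by simpa [hpj] using (h.2 k hk).add_le_of_lt hTk)⟩
  rw [load_move_of_forall_eq_zero (by simp [nonpivot, hpj])]
  exact hnp l hl

theorem exists_nonpivot_load_le {pmax : ℕ} (hp : ∀ j, 0 < p j) (hpmax : ∀ j, p j ≤ pmax)
    (ha : 0 < a) (hT : ∀ i ∈ B, (2 * a - 1) * pmax ≤ T i) (hsum : ∑ j, p j = ∑ i, T i)
    (h : IsModAssignment p T B a σ) (hpiv : pmax * #B ≤ ∑ i ∈ B, load (pivot p a) σ i) :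
    ∃ σ', IsModAssignment p T B a σ' ∧ ∀ i ∈ B, load (nonpivot p a) σ' i ≤ T i := by
  induction σ using (measure (excess (nonpivot p a) T B)).wf.induction with
  | _ σ ih =>
    by_cases hdone : ∀ i ∈ B, load (nonpivot p a) σ i ≤ T i
    · exact ⟨σ, h, hdone⟩
    obtain ⟨i, hi, hTi⟩ : ∃ i ∈ B, T i < load (nonpivot p a) σ i := by simpa using hdone
    obtain ⟨σ', h', hpiv', hlt⟩ := exists_nonpivot_move hp hpmax ha hT hsum h hpiv hi hTi
    exact ih σ' hlt h' hpiv'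

theorem exists_load_eq (ha : 0 < a) (hsum : ∑ j, p j = ∑ i, T i)
    (h : IsModAssignment p T B a σ) (hnp : ∀ i ∈ B, load (nonpivot p a) σ i ≤ T i) :
    ∃ σ' : ι → κ, ∀ i, load p σ' i = T i := by
  induction σ using (measure (excess p T B)).wf.induction with
  | _ σ ih =>
    by_cases hdone : ∀ i ∈ B, load p σ i ≤ T i
    · have hB := (sum_eq_sum_iff_of_le hdone).mp (h.sum_load_eq hsum)
      exact ⟨σ, fun i => if hi : i ∈ B then hB i hi else h.1 i hi⟩
    obtain ⟨i, hi, hTi⟩ : ∃ i ∈ B, T i < load p σ i := by simpa using hdone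
    obtain ⟨σ', h', hnp', hlt⟩ := exists_pivot_move ha hsum h hnp hi hTi
    exact ih σ' hlt h' hnp'

theorem exists_load_eq_of_isModAssignment {pmax : ℕ} (hp : ∀ j, 0 < p j)
    (hpmax : ∀ j, p j ≤ pmax) (ha : 0 < a) (hT : ∀ i ∈ B, (2 * a - 1) * pmax ≤ T i)
    (hsum : ∑ j, p j = ∑ i, T i) (h : IsModAssignment p T B a σ)
    (hpiv : pmax * #B ≤ ∑ i ∈ B, load (pivot p a) σ i) :
    ∃ σ' : ι → κ, ∀ i, load p σ' i = T i := by
  obtain ⟨σ', h', hnp⟩ := exists_nonpivot_load_le hp hpmax ha hT hsum h hpiv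
  exact exists_load_eq ha hsum h' hnp

end MultiwayPartitioning

open Finset MultiwayPartitioning

theorem modIP_feasible_implies_multiway_feasible_general
    (n m : ℕ)
    (p : Fin n → ℕ) (hp : ∀ j, 0 < p j)
    (T : Fin m → ℕ)
    (hsum : ∑ j, p j = ∑ i, T i)
    (pmax : ℕ) (hpmax : pmax = Finset.univ.sup p)
    (a : ℕ) (ha : ∃ j : Fin n, p j = a)
    (hfeas : ModIPFeasible n m p T pmax a) :
    MultiwayFeasible n m p T := by
  obtain ⟨x, -, hsmall, hbig, hpiv, hcol⟩ := hfeas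
  obtain ⟨σ, rfl⟩ := exists_eq_ite_of_sum_eq_one hcol
  simp only [sum_mul_ite_eq_load, sum_filter_sum_ite_eq_sum_load_pivot] at hsmall hbig hpiv
  obtain ⟨j₀, hj₀⟩ := ha
  have hle : ∀ j, p j ≤ pmax := fun j => hpmax ▸ le_sup (mem_univ j)
  have ha : 0 < a := hj₀ ▸ hp j₀
  have hapmax : a ≤ pmax := hj₀ ▸ hle j₀
  have hT : ∀ i, pmax ^ 4 ≤ T i → (2 * a - 1) * pmax ≤ T i := fun i hi => by
    have hpos : 1 ≤ pmax := ha.trans_le hapmax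
    have hcube : 2 * pmax ≤ pmax ^ 3 + 1 := by nlinarith [Nat.mul_le_mul hpos hpos]
    calc (2 * a - 1) * pmax ≤ pmax ^ 3 * pmax := Nat.mul_le_mul_right _ (by omega)
      _ = pmax ^ 4 := by ring
      _ ≤ T i := hi
  exact exists_load_eq_of_isModAssignment hp hle ha (fun i hi => hT i (by simpa using hi)) hsum
    ⟨fun i hi => hsmall i (by simpa using hi), fun i hi => hbig i (by simpa using hi)⟩
    ((Nat.mul_le_mul_right _ (Nat.le_self_pow two_ne_zero pmax)).trans hpiv)

/-- If mod-IP(a) is feasible for a pivot `a ∈ {p_1,…,p_n}`, then the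
Multiway Partitioning instance is feasible. -/
theorem modIP_feasible_implies_multiway_feasible
    (n m : ℕ) (hm : 1 ≤ m) (hmn : m ≤ n)
    (p : Fin n → ℕ) (hp : ∀ j, 0 < p j)
    (T : Fin m → ℕ)
    (hsum : ∑ j, p j = ∑ i, T i)
    (pmax : ℕ) (hpmax : pmax = Finset.univ.sup p)
    (a : ℕ) (ha : ∃ j : Fin n, p j = a)
    (hfeas : ModIPFeasible n m p T pmax a) :
    MultiwayFeasible n m p T :=
  modIP_feasible_implies_multiway_feasible_general n m p hp T hsum pmax hpmax a ha hfeas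
end

section
/- If the Multiway Partitioning instance is feasible, then there exists a pivot a ∈ {p_1,…,p_n} such that the system mod-IP(a) has a feasible solution x ∈ {0,1}^{m×n}. -/
/-- If the Multiway Partitioning instance is feasible, then there exists a
pivot `a ∈ {p_1,…,p_n}` such that mod-IP(a) is feasible. -/
theorem multiway_feasible_implies_exists_pivot_modIP_feasible
    (n m : ℕ) (hm : 1 ≤ m) (hmn : m ≤ n)
    (p : Fin n → ℕ) (hp : ∀ j, 0 < p j)
    (T : Fin m → ℕ)
    (hsum : ∑ j, p j = ∑ i, T i)
    (pmax : ℕ) (hpmax : pmax = Finset.univ.sup p)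
    (hfeas : MultiwayFeasible n m p T) :
    ∃ a : ℕ, (∃ j : Fin n, p j = a) ∧ ModIPFeasible n m p T pmax a := by
  obtain ⟨σ, hσ⟩ := hfeas
  have hn : 0 < n := hm.trans hmn
  have hple : ∀ j, p j ≤ pmax := fun j => hpmax ▸ Finset.le_sup (Finset.mem_univ j)
  have hpmax1 : 1 ≤ pmax := le_trans (hp ⟨0, hn⟩) (hple ⟨0, hn⟩)
  set x : Fin m → Fin n → ℕ := fun i j => if σ j = i then 1 else 0 with hxdef
  have hxsum : ∀ i, ∑ j, p j * x i j = T i := by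
    intro i
    rw [← hσ i, Finset.sum_filter]
    refine Finset.sum_congr rfl fun j _ => ?_
    by_cases h : σ j = i <;> simp [hxdef, h]
  have hcol : ∀ j, ∑ i, x i j = 1 := by
    intro j
    simp [hxdef, Finset.sum_ite_eq]
  set B := Finset.univ.filter (fun i : Fin m => pmax ^ 4 ≤ T i) with hBdef
  set J := Finset.univ.filter (fun j : Fin n => pmax ^ 4 ≤ T (σ j)) with hJdef
  have hmemB : ∀ j : Fin n, σ j ∈ B ↔ pmax ^ 4 ≤ T (σ j) := by
    intro j; simp [hBdef]
  have hcount : ∀ a : ℕ,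
      ∑ j ∈ Finset.univ.filter (fun j => p j = a), ∑ i ∈ B, x i j
        = (J.filter (fun j => p j = a)).card := by
    intro a
    have h1 : ∀ j : Fin n, ∑ i ∈ B, x i j = if σ j ∈ B then 1 else 0 := by
      intro j
      simp [hxdef, Finset.sum_ite_eq]
    calc ∑ j ∈ Finset.univ.filter (fun j => p j = a), ∑ i ∈ B, x i j
        = ∑ j ∈ Finset.univ.filter (fun j => p j = a), (if σ j ∈ B then 1 else 0) :=
          Finset.sum_congr rfl fun j _ => h1 j
      _ = ((Finset.univ.filter (fun j => p j = a)).filter (fun j => σ j ∈ B)).card :=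
          (Finset.card_filter _ _).symm
      _ = (J.filter (fun j => p j = a)).card := by
          rw [Finset.filter_filter, Finset.filter_filter]
          congr 1
          apply Finset.filter_congr
          intro j _
          simp [hmemB j, and_comm]
  -- fibers of big machines are large
  have hfib : ∀ i ∈ B, pmax ^ 3 ≤ (Finset.univ.filter (fun j => σ j = i)).card := by
    intro i hi
    have hTi : pmax ^ 4 ≤ T i := (Finset.mem_filter.mp hi).2
    have hle : T i ≤ pmax * (Finset.univ.filter (fun j => σ j = i)).card := by
      rw [← hσ i]
      calc ∑ j ∈ Finset.univ.filter (fun j => σ j = i), p j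
          ≤ ∑ _j ∈ Finset.univ.filter (fun j => σ j = i), pmax :=
            Finset.sum_le_sum fun j _ => hple j
        _ = pmax * (Finset.univ.filter (fun j => σ j = i)).card := by
            rw [Finset.sum_const, smul_eq_mul, mul_comm]
    have h4 : pmax * pmax ^ 3 ≤ pmax * (Finset.univ.filter (fun j => σ j = i)).card := by
      calc pmax * pmax ^ 3 = pmax ^ 4 := by ring
        _ ≤ T i := hTi
        _ ≤ _ := hle
    exact Nat.le_of_mul_le_mul_left h4 hpmax1
  have hJcard : pmax ^ 3 * B.card ≤ J.card := by
    have hJeq : J.card = ∑ i ∈ B, (Finset.univ.filter (fun j => σ j = i)).card := by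
      have : ∀ i, (Finset.univ.filter (fun j => σ j = i)).card
          = ∑ j : Fin n, if σ j = i then 1 else 0 := fun i => Finset.card_filter _ _
      simp_rw [this]
      rw [Finset.sum_comm]
      rw [Finset.card_filter]
      refine Finset.sum_congr rfl fun j _ => ?_
      rw [Finset.sum_ite_eq B (σ j) (fun _ => 1)]
      simp [hmemB j]
    rw [hJeq]
    calc pmax ^ 3 * B.card = ∑ _i ∈ B, pmax ^ 3 := by
          rw [Finset.sum_const, smul_eq_mul, mul_comm]
      _ ≤ ∑ i ∈ B, (Finset.univ.filter (fun j => σ j = i)).card :=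
          Finset.sum_le_sum hfib
  by_cases hBne : B.Nonempty
  · -- J is nonempty
    obtain ⟨i, hi⟩ := hBne
    have hfi : 0 < (Finset.univ.filter (fun j => σ j = i)).card :=
      lt_of_lt_of_le (by positivity) (hfib i hi)
    obtain ⟨j0, hj0⟩ := Finset.card_pos.mp hfi
    have hj0J : j0 ∈ J := by
      rw [hJdef, Finset.mem_filter]
      refine ⟨Finset.mem_univ _, ?_⟩
      rw [(Finset.mem_filter.mp hj0).2]
      exact (Finset.mem_filter.mp hi).2
    have hJne : J.Nonempty := ⟨j0, hj0J⟩
    have himcard : (J.image p).card ≤ pmax := by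
      have hsub : J.image p ⊆ Finset.Icc 1 pmax := by
        intro a ha
        obtain ⟨j, _, rfl⟩ := Finset.mem_image.mp ha
        exact Finset.mem_Icc.mpr ⟨hp j, hple j⟩
      calc (J.image p).card ≤ (Finset.Icc 1 pmax).card := Finset.card_le_card hsub
        _ = pmax := by rw [Nat.card_Icc]; omega
    obtain ⟨a, haim, hacard⟩ := Finset.exists_le_card_fiber_of_mul_le_card_of_maps_to
      (f := p) (s := J) (t := J.image p) (fun j hj => Finset.mem_image_of_mem p hj)
      (hJne.image p)
      (by
        calc (J.image p).card * (pmax ^ 2 * B.card)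
            ≤ pmax * (pmax ^ 2 * B.card) := Nat.mul_le_mul_right _ himcard
          _ = pmax ^ 3 * B.card := by ring
          _ ≤ J.card := hJcard)
    obtain ⟨j, _, hja⟩ := Finset.mem_image.mp haim
    refine ⟨a, ⟨j, hja⟩, x, ?_, ?_, ?_, ?_, hcol⟩
    · intro i' j'; by_cases h : σ j' = i' <;> simp [hxdef, h]
    · intro i' _; exact hxsum i'
    · intro i' _; rw [hxsum i']
    · rw [hcount a]; exact hacard
  · have hB0 : B.card = 0 := by
      rw [Finset.card_eq_zero]
      exact Finset.not_nonempty_iff_eq_empty.mp hBne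
    refine ⟨p ⟨0, hn⟩, ⟨⟨0, hn⟩, rfl⟩, x, ?_, ?_, ?_, ?_, hcol⟩
    · intro i' j'; by_cases h : σ j' = i' <;> simp [hxdef, h]
    · intro i' _; exact hxsum i'
    · intro i' _; rw [hxsum i']
    · rw [hB0]; simp
end

section
/- Let a ∈ {p_1,…,p_n} and let x ∈ {0,1}^{m×n} be a feasible solution of mod-IP(a). Let z ∈ {0,1}^{m×n} be any partial assignment satisfying: (a) z_{ij} = x_{ij} for every small machine i ∈ S and every job j; (b) ∑_{i=1}^m z_{ij} ≤ 1 for every job j; (c) z_{ij} = 0 for every big machine i ∈ B and every job j with p_j = a. Then ∑_{i∈B} ∑_{j=1}^n p_j z_{ij} ≤ ∑_{i∈B} T_i − p_max^2·|B|; in particular, if B ≠ ∅ then there exists a big machine i ∈ B with ∑_{j=1}^n p_j z_{ij} ≤ T_i − p_max^2. -/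
/-- Given a feasible solution `x` of mod-IP(a) and any partial binary assignment `z`
that agrees with `x` on small machines, assigns each job at most once, and puts no
job of processing time `a` on a big machine, the total load on big machines is at
most `∑_{i∈B} T_i − p_max²·|B|`; in particular some big machine has slack at least
`p_max²`. -/
theorem big_machine_slack_phase_two
    (n m : ℕ) (hm : 1 ≤ m) (hmn : m ≤ n)
    (p : Fin n → ℕ) (hp : ∀ j, 0 < p j)
    (T : Fin m → ℕ)
    (hsum : ∑ j, p j = ∑ i, T i)
    (pmax : ℕ) (hpmax : pmax = Finset.univ.sup p)
    (a : ℕ) (ha : ∃ j : Fin n, p j = a)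
    -- a feasible solution `x` of mod-IP(a)
    (x : Fin m → Fin n → ℕ)
    (hx01 : ∀ i j, x i j ≤ 1)
    (hx1 : ∀ i : Fin m, T i < pmax ^ 4 → ∑ j, p j * x i j = T i)
    (hx2 : ∀ i : Fin m, pmax ^ 4 ≤ T i → ∑ j, p j * x i j ≡ T i [MOD a])
    (hx3 : pmax ^ 2 * (Finset.univ.filter (fun i : Fin m => pmax ^ 4 ≤ T i)).card ≤
      ∑ j ∈ Finset.univ.filter (fun j => p j = a),
        ∑ i ∈ Finset.univ.filter (fun i : Fin m => pmax ^ 4 ≤ T i), x i j)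
    (hx4 : ∀ j : Fin n, ∑ i, x i j = 1)
    -- a partial binary assignment `z`
    (z : Fin m → Fin n → ℕ)
    (hz01 : ∀ i j, z i j ≤ 1)
    (hza : ∀ i : Fin m, T i < pmax ^ 4 → ∀ j, z i j = x i j)
    (hzb : ∀ j : Fin n, ∑ i, z i j ≤ 1)
    (hzc : ∀ i : Fin m, pmax ^ 4 ≤ T i → ∀ j, p j = a → z i j = 0) :
    (∑ i ∈ Finset.univ.filter (fun i : Fin m => pmax ^ 4 ≤ T i), ∑ j, p j * z i j)
        + pmax ^ 2 * (Finset.univ.filter (fun i : Fin m => pmax ^ 4 ≤ T i)).card ≤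
      ∑ i ∈ Finset.univ.filter (fun i : Fin m => pmax ^ 4 ≤ T i), T i ∧
    ((Finset.univ.filter (fun i : Fin m => pmax ^ 4 ≤ T i)).Nonempty →
      ∃ i ∈ Finset.univ.filter (fun i : Fin m => pmax ^ 4 ≤ T i),
        (∑ j, p j * z i j) + pmax ^ 2 ≤ T i) := by

  classical
  set B := Finset.univ.filter (fun i : Fin m => pmax ^ 4 ≤ T i) with hBdef
  -- per-job comparison on big machines
  have hzx : ∀ j : Fin n, ∑ i ∈ B, z i j ≤ ∑ i ∈ B, x i j := by
    intro j
    have hS : ∑ i ∈ Finset.univ.filter (fun i : Fin m => ¬ pmax ^ 4 ≤ T i), z i j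
        = ∑ i ∈ Finset.univ.filter (fun i : Fin m => ¬ pmax ^ 4 ≤ T i), x i j := by
      refine Finset.sum_congr rfl fun i hi => ?_
      simp only [Finset.mem_filter, Finset.mem_univ, true_and, not_le] at hi
      exact hza i hi j
    have h2 : ∑ i ∈ B, z i j + ∑ i ∈ Finset.univ.filter (fun i : Fin m => ¬ pmax ^ 4 ≤ T i), z i j
        = ∑ i, z i j := Finset.sum_filter_add_sum_filter_not _ _ _
    have h3 : ∑ i ∈ B, x i j + ∑ i ∈ Finset.univ.filter (fun i : Fin m => ¬ pmax ^ 4 ≤ T i), x i j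
        = ∑ i, x i j := Finset.sum_filter_add_sum_filter_not _ _ _
    have h4 := hzb j
    have h5 := hx4 j
    omega
  -- rewrite loads as sums over jobs
  have swapz : ∑ i ∈ B, ∑ j, p j * z i j = ∑ j, p j * ∑ i ∈ B, z i j := by
    rw [Finset.sum_comm]
    exact Finset.sum_congr rfl fun j _ => (Finset.mul_sum _ _ _).symm
  have swapx : ∑ i ∈ B, ∑ j, p j * x i j = ∑ j, p j * ∑ i ∈ B, x i j := by
    rw [Finset.sum_comm]
    exact Finset.sum_congr rfl fun j _ => (Finset.mul_sum _ _ _).symm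
  -- total load of x on big machines equals sum of big targets
  have hxB : ∑ i ∈ B, ∑ j, p j * x i j = ∑ i ∈ B, T i := by
    have hS : ∑ i ∈ Finset.univ.filter (fun i : Fin m => ¬ pmax ^ 4 ≤ T i), ∑ j, p j * x i j
        = ∑ i ∈ Finset.univ.filter (fun i : Fin m => ¬ pmax ^ 4 ≤ T i), T i := by
      refine Finset.sum_congr rfl fun i hi => ?_
      simp only [Finset.mem_filter, Finset.mem_univ, true_and, not_le] at hi
      exact hx1 i hi
    have h2 : ∑ i ∈ B, ∑ j, p j * x i j
        + ∑ i ∈ Finset.univ.filter (fun i : Fin m => ¬ pmax ^ 4 ≤ T i), ∑ j, p j * x i j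
        = ∑ i, ∑ j, p j * x i j := Finset.sum_filter_add_sum_filter_not _ _ _
    have h3 : ∑ i ∈ B, T i
        + ∑ i ∈ Finset.univ.filter (fun i : Fin m => ¬ pmax ^ 4 ≤ T i), T i
        = ∑ i, T i := Finset.sum_filter_add_sum_filter_not _ _ _
    have h4 : ∑ i : Fin m, ∑ j, p j * x i j = ∑ j, p j := by
      rw [Finset.sum_comm]
      refine Finset.sum_congr rfl fun j _ => ?_
      rw [← Finset.mul_sum, hx4 j, mul_one]
    omega
  -- split jobs by whether p j = a
  have hzero : ∀ j ∈ Finset.univ.filter (fun j : Fin n => p j = a), p j * ∑ i ∈ B, z i j = 0 := by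
    intro j hj
    simp only [Finset.mem_filter, Finset.mem_univ, true_and] at hj
    have : ∑ i ∈ B, z i j = 0 := by
      refine Finset.sum_eq_zero fun i hi => ?_
      simp only [hBdef, Finset.mem_filter, Finset.mem_univ, true_and] at hi
      exact hzc i hi j hj
    rw [this, mul_zero]
  have hsplitz : ∑ j, p j * ∑ i ∈ B, z i j
      = ∑ j ∈ Finset.univ.filter (fun j : Fin n => ¬ p j = a), p j * ∑ i ∈ B, z i j := by
    have := Finset.sum_filter_add_sum_filter_not (Finset.univ : Finset (Fin n))
      (fun j => p j = a) (fun j => p j * ∑ i ∈ B, z i j)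
    have hz0 : ∑ j ∈ Finset.univ.filter (fun j : Fin n => p j = a), p j * ∑ i ∈ B, z i j = 0 := Finset.sum_eq_zero hzero
    omega
  have hsplitx : ∑ j ∈ Finset.univ.filter (fun j : Fin n => p j = a), p j * ∑ i ∈ B, x i j
      + ∑ j ∈ Finset.univ.filter (fun j : Fin n => ¬ p j = a), p j * ∑ i ∈ B, x i j
      = ∑ j, p j * ∑ i ∈ B, x i j :=
    Finset.sum_filter_add_sum_filter_not _ _ _
  -- big-a-jobs give at least pmax^2 * |B|
  have hbig : pmax ^ 2 * B.card ≤ ∑ j ∈ Finset.univ.filter (fun j : Fin n => p j = a), p j * ∑ i ∈ B, x i j := by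
    refine le_trans hx3 (Finset.sum_le_sum fun j _ => ?_)
    exact Nat.le_mul_of_pos_left _ (hp j)
  -- not-a jobs: z load ≤ x load
  have hna : ∑ j ∈ Finset.univ.filter (fun j : Fin n => ¬ p j = a), p j * ∑ i ∈ B, z i j
      ≤ ∑ j ∈ Finset.univ.filter (fun j : Fin n => ¬ p j = a), p j * ∑ i ∈ B, x i j :=
    Finset.sum_le_sum fun j _ => Nat.mul_le_mul_left _ (hzx j)
  have main : (∑ i ∈ B, ∑ j, p j * z i j) + pmax ^ 2 * B.card ≤ ∑ i ∈ B, T i := by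
    rw [swapz, hsplitz, ← hxB, swapx]
    omega
  refine ⟨main, fun hBne => ?_⟩
  by_contra hcon
  push_neg at hcon
  have hsum2 : ∑ i ∈ B, (T i + 1) ≤ ∑ i ∈ B, ((∑ j, p j * z i j) + pmax ^ 2) :=
    Finset.sum_le_sum fun i hi => by have := hcon i hi; omega
  rw [Finset.sum_add_distrib, Finset.sum_add_distrib, Finset.sum_const, smul_eq_mul, mul_one,
    Finset.sum_const, smul_eq_mul] at hsum2
  have hcard : 1 ≤ B.card := Finset.card_pos.mpr hBne
  nlinarith [main, hsum2, hcard]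
end

section
/- (Steinitz Lemma) Let ‖·‖ be an arbitrary norm on ℝ^d and let v_1,…,v_n ∈ ℝ^d satisfy v_1 + ⋯ + v_n = 0 and ‖v_i‖ ≤ 1 for all i = 1,…,n. Then there exists a permutation σ of {1,…,n} such that for all i = 1,…,n it holds that ‖v_{σ(1)} + ⋯ + v_{σ(i)}‖ ≤ d. -/
/-!
Call `A ⊆ {1, …, n}` good if it carries Steinitz weights `w ∈ [0, 1]^A`, i.e.
`∑_A w_i = |A| - d` and `∑_A w_i v_i = 0`. For a good `A`,
`‖∑_A v_i‖ = ‖∑_A (1 - w_i) v_i‖ ≤ ∑_A (1 - w_i) = d`. The whole index set is good (constant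
weights `(n - d) / n`), and a good `A` with `|A| > d` has a good subset of size `|A| - 1`:
scaling `w` shows that the polytope `{x ∈ [0, 1]^A : ∑ x_i = |A| - 1 - d, ∑ x_i v_i = 0}` is
nonempty, and at an extreme point at most `d + 1` coordinates lie in `(0, 1)`, because the
polytope is cut out by `d + 1` linear equations. With that few fractional coordinates the sum
`|A| - 1 - d` can only be reached if some coordinate vanishes; dropping it leaves a good set.
Removing elements one at a time orders the vectors so that every prefix of length at least `d`
is good, and a shorter prefix has norm at most its length.
-/

open Finset Module Filter Topology

theorem Finset.exists_list_forall_take {α : Type*} [DecidableEq α] (P : Finset α → Prop)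
    (hP : ∀ A, P A → A.Nonempty → ∃ a ∈ A, P (A.erase a)) {A : Finset α} (hA : P A) :
    ∃ l : List α, l.Nodup ∧ l.toFinset = A ∧ ∀ k, P (l.take k).toFinset := by
  induction A using Finset.strongInduction with
  | H A ih =>
    obtain rfl | hne := A.eq_empty_or_nonempty
    · exact ⟨[], List.nodup_nil, rfl, fun _ => by simpa using hA⟩
    obtain ⟨a, ha, hPa⟩ := hP A hA hne
    obtain ⟨l, hnodup, hl, htake⟩ := ih _ (erase_ssubset ha) hPa
    have hal : a ∉ l := by simp [← List.mem_toFinset, hl]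
    refine ⟨l ++ [a], hnodup.append (List.nodup_singleton a) (by simpa using hal), ?_,
      fun k => ?_⟩
    · rw [List.toFinset_append, hl]
      simpa using insert_erase ha
    · rcases le_or_gt k l.length with hk | hk
      · rw [List.take_append_of_le_length hk]
        exact htake k
      · rw [List.take_of_length_le (by simpa using hk), List.toFinset_append, hl]
        simpa [insert_erase ha] using hA

theorem Equiv.Perm.exists_forall_map_Iic {n : ℕ} (P : Finset (Fin n) → Prop)
    (hP : ∀ A, P A → A.Nonempty → ∃ a ∈ A, P (A.erase a)) (huniv : P univ) :
    ∃ σ : Equiv.Perm (Fin n), ∀ i, P ((Iic i).map σ.toEmbedding) := by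
  obtain ⟨l, hnodup, hl, htake⟩ := exists_list_forall_take P hP huniv
  have hmem : ∀ x, x ∈ l := fun x => by simp [← List.mem_toFinset, hl]
  have hlen : l.length = n := by
    simpa [hl] using (List.toFinset_card_of_nodup hnodup).symm
  refine ⟨(finCongr hlen.symm).trans (hnodup.getEquivOfForallMemList l hmem), fun i => ?_⟩
  convert htake ((i : ℕ) + 1) using 1
  refine Finset.ext fun x => ?_
  simp only [Finset.mem_map, Finset.mem_Iic, List.mem_toFinset, List.mem_take_iff_getElem, hlen]
  constructor
  · rintro ⟨j, hj, rfl⟩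
    exact ⟨j, by omega, rfl⟩
  · rintro ⟨j, hj, rfl⟩
    exact ⟨⟨j, by omega⟩, Fin.mk_le_of_le_val (by omega), rfl⟩

section BoxPolytope

variable {ι F : Type*} [Finite ι] [AddCommGroup F] [Module ℝ F]

theorem exists_mem_extremePoints_Icc_inter_preimage (L : (ι → ℝ) →ₗ[ℝ] F) {x : ι → ℝ}
    (hx : x ∈ Set.Icc 0 1) : (Set.extremePoints ℝ (Set.Icc 0 1 ∩ L ⁻¹' {L x})).Nonempty := by
  have hclosed : IsClosed (L ⁻¹' {L x}) := by
    have : L ⁻¹' {L x} = (· - x) ⁻¹' LinearMap.ker L := by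
      ext y
      simp [sub_eq_zero]
    rw [this]
    exact (LinearMap.ker L).closed_of_finiteDimensional.preimage (continuous_sub_right x)
  exact (isCompact_Icc.inter_right hclosed).extremePoints_nonempty ⟨x, hx, rfl⟩

theorem eq_zero_of_mem_extremePoints_of_mem_ker (L : (ι → ℝ) →ₗ[ℝ] F) {c : F} {μ : ι → ℝ}
    (hμ : μ ∈ (Set.Icc 0 1 ∩ L ⁻¹' {c}).extremePoints ℝ) {u : ι → ℝ} (hu : L u = 0)
    (hsupp : ∀ i, u i ≠ 0 → μ i ∈ Set.Ioo 0 1) : u = 0 := by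
  have hnear : ∀ᶠ t : ℝ in 𝓝 0, μ + t • u ∈ Set.Icc 0 1 := by
    have hcoord : ∀ i, ∀ᶠ t : ℝ in 𝓝 0, μ i + t * u i ∈ Set.Icc 0 1 := fun i => by
      by_cases h : u i = 0
      · simpa [h] using ⟨hμ.1.1.1 i, hμ.1.1.2 i⟩
      · refine Eventually.mono ?_ fun _ ht => Set.Ioo_subset_Icc_self ht
        exact ((continuous_const.add (continuous_id.mul continuous_const)).tendsto' 0 (μ i)
          (by simp)).eventually (isOpen_Ioo.mem_nhds (hsupp i h))
    exact (eventually_all.2 hcoord).mono fun t ht => ⟨fun i => (ht i).1, fun i => (ht i).2⟩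
  obtain ⟨t, ⟨hplus, hminus⟩, ht⟩ :=
    (((hnear.and ((continuous_neg.tendsto' 0 0 neg_zero).eventually hnear)).filter_mono
      nhdsWithin_le_nhds).and self_mem_nhdsWithin).exists (f := 𝓝[≠] 0)
  have hmem : ∀ s : ℝ, μ + s • u ∈ Set.Icc 0 1 → μ + s • u ∈ Set.Icc 0 1 ∩ L ⁻¹' {c} :=
    fun s hs => ⟨hs, by simpa [hu] using hμ.1.2⟩
  have hμt : μ + t • u = μ := hμ.2 (hmem t hplus) (hmem (-t) (by simpa using hminus))
    (by simpa [← sub_eq_add_neg] using mem_openSegment_add_sub μ (t • u))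
  exact (smul_eq_zero.1 (add_eq_left.1 hμt)).resolve_left ht

theorem card_le_finrank_of_mem_extremePoints [FiniteDimensional ℝ F] (L : (ι → ℝ) →ₗ[ℝ] F)
    {c : F} {μ : ι → ℝ} (hμ : μ ∈ (Set.Icc 0 1 ∩ L ⁻¹' {c}).extremePoints ℝ) {s : Finset ι}
    (hs : ∀ i ∈ s, μ i ∈ Set.Ioo 0 1) : #s ≤ finrank ℝ F := by
  by_contra! hlt
  let extend := Function.ExtendByZero.linearMap ℝ (Subtype.val : s → ι)
  have hker : LinearMap.ker (L ∘ₗ extend) ≠ ⊥ :=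
    LinearMap.ker_ne_bot_of_finrank_lt (by simpa using hlt)
  obtain ⟨w, hw, hw0⟩ := Submodule.exists_mem_ne_zero_of_ne_bot hker
  have hsupp : ∀ i, extend w i ≠ 0 → μ i ∈ Set.Ioo 0 1 := fun i hi => by
    by_contra hμi
    exact hi (Function.extend_apply' _ _ _ fun ⟨j, hj⟩ => hμi (hj ▸ hs j j.2))
  have hext := eq_zero_of_mem_extremePoints_of_mem_ker L hμ hw hsupp
  exact hw0 (funext fun j => by
    simpa [extend, Subtype.val_injective.extend_apply] using congrFun hext j)

end BoxPolytope

theorem Finset.exists_eq_zero_of_sum_eq_card_sub {ι : Type*} {A : Finset ι} {μ : ι → ℝ}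
    {m : ℕ} (hμ : ∀ i, μ i ∈ Set.Icc 0 1) (hsum : ∑ i ∈ A, μ i = #A - (m + 1))
    (hfrac : ∀ s : Finset ι, (∀ i ∈ s, μ i ∈ Set.Ioo 0 1) → #s ≤ m + 1) :
    ∃ a ∈ A, μ a = 0 := by
  classical
  by_contra! hpos
  set s := A.filter (μ · < 1)
  have hs : #s ≤ m + 1 := hfrac s fun i hi => by
    obtain ⟨hiA, hi1⟩ := mem_filter.1 hi
    exact ⟨(hμ i).1.lt_of_ne' (hpos i hiA), hi1⟩
  have hdefect : ∑ i ∈ s, (1 - μ i) = m + 1 := by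
    rw [sum_filter_of_ne fun i _ h => lt_of_le_of_ne (hμ i).2 (sub_ne_zero.1 h).symm]
    simp [sum_sub_distrib, hsum]
  obtain hs0 | hsne := s.eq_empty_or_nonempty
  · rw [hs0, sum_empty] at hdefect
    linarith
  · have hlt : ∀ i ∈ s, 1 - μ i < 1 := fun i hi =>
      sub_lt_self 1 ((hμ i).1.lt_of_ne' (hpos i (mem_filter.1 hi).1))
    have : (m + 1 : ℝ) < m + 1 :=
      calc (m + 1 : ℝ) = ∑ i ∈ s, (1 - μ i) := hdefect.symm
        _ < ∑ i ∈ s, 1 := sum_lt_sum_of_nonempty hsne hlt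
        _ = #s := by simp
        _ ≤ m + 1 := by exact_mod_cast hs
    exact this.false

theorem Seminorm.map_sum_le_sum_one_sub {E ι : Type*} [AddCommGroup E] [Module ℝ E]
    (p : Seminorm ℝ E) {A : Finset ι} {v : ι → E} (hv : ∀ i ∈ A, p (v i) ≤ 1) {w : ι → ℝ}
    (hw : ∀ i ∈ A, w i ≤ 1) (hwv : ∑ i ∈ A, w i • v i = 0) :
    p (∑ i ∈ A, v i) ≤ ∑ i ∈ A, (1 - w i) :=
  calc p (∑ i ∈ A, v i) = p (∑ i ∈ A, (1 - w i) • v i) := by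
        simp only [sub_smul, one_smul, sum_sub_distrib, hwv, sub_zero]
    _ ≤ ∑ i ∈ A, p ((1 - w i) • v i) :=
        le_sum_of_subadditive p (map_zero p).le (map_add_le_add p) _ _
    _ = ∑ i ∈ A, (1 - w i) * p (v i) := sum_congr rfl fun i hi => by
        rw [map_smul_eq_mul, Real.norm_of_nonneg (sub_nonneg.2 (hw i hi))]
    _ ≤ ∑ i ∈ A, (1 - w i) := sum_le_sum fun i hi =>
        mul_le_of_le_one_right (sub_nonneg.2 (hw i hi)) (hv i hi)

def HasSteinitzWeights {ι E : Type*} [AddCommGroup E] [Module ℝ E] (v : ι → E) (d : ℕ)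
    (A : Finset ι) : Prop :=
  ∃ w : ι → ℝ, (∀ i, w i ∈ Set.Icc 0 1) ∧ ∑ i ∈ A, w i = #A - d ∧ ∑ i ∈ A, w i • v i = 0

namespace HasSteinitzWeights

variable {ι E : Type*} [AddCommGroup E] [Module ℝ E] {v : ι → E} {d : ℕ} {A : Finset ι}

theorem seminorm_sum_le (hA : HasSteinitzWeights v d A) (p : Seminorm ℝ E)
    (hv : ∀ i, p (v i) ≤ 1) : p (∑ i ∈ A, v i) ≤ d := by
  obtain ⟨w, hw, hwsum, hwv⟩ := hA
  calc p (∑ i ∈ A, v i) ≤ ∑ i ∈ A, (1 - w i) :=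
        p.map_sum_le_sum_one_sub (fun i _ => hv i) (fun i _ => (hw i).2) hwv
    _ = d := by simp [sum_sub_distrib, hwsum]

theorem univ [Fintype ι] (hv : ∑ i, v i = 0) (hd : d ≤ Fintype.card ι) :
    HasSteinitzWeights v d univ := by
  have hd' : (d : ℝ) ≤ Fintype.card ι := by exact_mod_cast hd
  refine ⟨fun _ => (Fintype.card ι - d) / Fintype.card ι, fun _ => ⟨?_, ?_⟩, ?_, ?_⟩
  · exact div_nonneg (sub_nonneg.2 hd') (Nat.cast_nonneg _)
  · exact div_le_one_of_le₀ (sub_le_self _ (Nat.cast_nonneg _)) (Nat.cast_nonneg _)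
  · rcases (Fintype.card ι).eq_zero_or_pos with hn | hn
    · simp [hn, Nat.le_zero.1 (hn ▸ hd)]
    · simp only [sum_const, card_univ, nsmul_eq_mul]
      exact mul_div_cancel₀ _ (Nat.cast_ne_zero.2 hn.ne')
  · rw [← smul_sum, hv, smul_zero]

theorem exists_erase [Finite ι] [DecidableEq ι] [FiniteDimensional ℝ E]
    (hE : finrank ℝ E ≤ d) (hA : HasSteinitzWeights v d A) (hcard : d < #A) :
    ∃ a ∈ A, HasSteinitzWeights v d (A.erase a) := by
  obtain ⟨w, hw, hwsum, hwv⟩ := hA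
  let L : (ι → ℝ) →ₗ[ℝ] ℝ × E :=
    (∑ i ∈ A, LinearMap.proj i).prod (∑ i ∈ A, (LinearMap.proj i).smulRight (v i))
  have hL : ∀ x, L x = (∑ i ∈ A, x i, ∑ i ∈ A, x i • v i) := fun x => by simp [L]
  have hgap : (1 : ℝ) ≤ #A - d := by
    rw [le_sub_iff_add_le', ← Nat.cast_succ]
    exact_mod_cast hcard
  set t := ((#A : ℝ) - (d + 1)) / (#A - d)
  have ht : t ∈ Set.Icc 0 1 :=
    ⟨div_nonneg (by linarith) (by linarith), div_le_one_of_le₀ (by linarith) (by linarith)⟩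
  have htw : L (t • w) = ((#A : ℝ) - (d + 1), 0) := by
    simp only [hL, Pi.smul_apply, smul_eq_mul, ← mul_sum, hwsum, mul_smul, ← smul_sum, hwv,
      smul_zero, t, div_mul_cancel₀ _ (by linarith : (#A : ℝ) - d ≠ 0)]
  obtain ⟨μ, hμ⟩ := exists_mem_extremePoints_Icc_inter_preimage L (x := t • w)
    ⟨fun i => mul_nonneg ht.1 (hw i).1, fun i => mul_le_one₀ ht.2 (hw i).1 (hw i).2⟩
  obtain ⟨hμI, hμL⟩ := hμ.1
  rw [Set.mem_preimage, Set.mem_singleton_iff, htw, hL, Prod.mk.injEq] at hμL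
  obtain ⟨a, ha, hμa⟩ := exists_eq_zero_of_sum_eq_card_sub (fun i => ⟨hμI.1 i, hμI.2 i⟩) hμL.1
    fun s hs => (card_le_finrank_of_mem_extremePoints L hμ hs).trans
      (by simpa [add_comm] using hE)
  refine ⟨a, ha, μ, fun i => ⟨hμI.1 i, hμI.2 i⟩, ?_, ?_⟩
  · rw [sum_erase _ hμa, hμL.1, card_erase_of_mem ha, Nat.cast_pred (card_pos.2 ⟨a, ha⟩)]
    ring
  · rw [sum_erase _ (by rw [hμa, zero_smul]), hμL.2]

end HasSteinitzWeights

theorem steinitz_lemma_general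
    (d n : ℕ)
    (N : (Fin d → ℝ) → ℝ)
    (hNhom : ∀ (c : ℝ) (v : Fin d → ℝ), N (c • v) = |c| * N v)
    (hNtri : ∀ u v : Fin d → ℝ, N (u + v) ≤ N u + N v)
    (v : Fin n → Fin d → ℝ)
    (hsum : ∑ j, v j = 0)
    (hbound : ∀ j, N (v j) ≤ 1) :
    ∃ σ : Equiv.Perm (Fin n),
      ∀ i : Fin n, N (∑ k ∈ Finset.Iic i, v (σ k)) ≤ d := by
  let p : Seminorm ℝ (Fin d → ℝ) := .of N hNtri fun c x => by rw [hNhom, Real.norm_eq_abs]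
  let P : Finset (Fin n) → Prop := fun A => #A ≤ d ∨ HasSteinitzWeights v d A
  have hP : ∀ A, P A → A.Nonempty → ∃ a ∈ A, P (A.erase a) := by
    rintro A hA ⟨a, ha⟩
    rcases le_or_gt #A d with hsmall | hlarge
    · exact ⟨a, ha, .inl (card_erase_le.trans hsmall)⟩
    · obtain ⟨b, hb, hgood⟩ := (hA.resolve_left hlarge.not_ge).exists_erase
        (finrank_fin_fun ℝ).le hlarge
      exact ⟨b, hb, .inr hgood⟩
  have huniv : P univ := by
    rcases le_or_gt n d with hsmall | hlarge
    · exact .inl (by simpa using hsmall)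
    · exact .inr (HasSteinitzWeights.univ hsum (by simpa using hlarge.le))
  obtain ⟨σ, hσ⟩ := Equiv.Perm.exists_forall_map_Iic P hP huniv
  refine ⟨σ, fun i => ?_⟩
  change p (∑ k ∈ Iic i, v (σ.toEmbedding k)) ≤ d
  rw [← sum_map]
  rcases hσ i with hsmall | hgood
  · calc p (∑ j ∈ (Iic i).map σ.toEmbedding, v j) ≤ ∑ j ∈ (Iic i).map σ.toEmbedding, (1 - 0) :=
          p.map_sum_le_sum_one_sub (fun j _ => hbound j) (fun _ _ => zero_le_one) (by simp)
      _ ≤ d := by rw [sub_zero, sum_const, nsmul_one]; exact_mod_cast hsmall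
  · exact hgood.seminorm_sum_le p hbound

/-- **Steinitz Lemma.** For any norm `N` on `ℝ^d` and vectors `v_1,…,v_n` summing
to zero with `N (v i) ≤ 1`, there is a permutation `σ` such that every prefix sum
of the reordered sequence has norm at most `d`. -/
theorem steinitz_lemma
    (d n : ℕ) (hd : 1 ≤ d) (hn : 1 ≤ n)
    (N : (Fin d → ℝ) → ℝ)
    (hN0 : ∀ v : Fin d → ℝ, N v = 0 ↔ v = 0)
    (hNhom : ∀ (c : ℝ) (v : Fin d → ℝ), N (c • v) = |c| * N v)
    (hNtri : ∀ u v : Fin d → ℝ, N (u + v) ≤ N u + N v)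
    (v : Fin n → Fin d → ℝ)
    (hsum : ∑ j, v j = 0)
    (hbound : ∀ j, N (v j) ≤ 1) :
    ∃ σ : Equiv.Perm (Fin n),
      ∀ i : Fin n, N (∑ k ∈ Finset.Iic i, v (σ k)) ≤ d :=
  steinitz_lemma_general d n N hNhom hNtri v hsum hbound
end

section
/- Let d, Δ, t be positive integers, S a finite set, and for each i ∈ S let A_i ∈ ℤ^d with ‖A_i‖_∞ ≤ Δ. Let x : S → ℕ satisfy ∑_{i∈S} x_i = t, and write w = ∑_{i∈S} x_i·A_i ∈ ℤ^d. Then there exists a sequence σ : {1,…,t} → S in which each i ∈ S occurs exactly x_i times, such that for every k = 1,…,t, ‖A_{σ(1)} + ⋯ + A_{σ(k)} − (k/t)·w‖_∞ ≤ 2dΔ. -/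
/-!
Grinberg–Sevastyanov's proof of the Steinitz lemma, applied to the vectors `A i - w / t`
(each `i` taken `x i` times), which sum to zero and have sup norm at most `2Δ`.

Call a finite family `(v j)_{j ∈ B}` in a space of dimension `d` feasible if some weights
`a ∈ [0, 1]^B` satisfy `∑ a j ≥ #B - d` and `∑ a j • v j = 0`. Then
`∑ v j = ∑ (1 - a j) • v j` has norm at most `d · max ‖v j‖`. A family summing to zero is
feasible (constant weights), and a feasible family with more than `d` members stays feasible after
deleting a suitable member: rescale the weights to sum to `#B - d - 1` and pass to a vertex of
`{a ∈ [0, 1]^B | ∑ a j • (1, v j) = const}`; it has at most `d + 1` fractional weights, so one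
weight is `0`. Deleting members one at a time and listing them in reverse gives an ordering
all of whose prefix sums are feasible.
-/

open Finset Module

section Vertex

variable {𝕜 J : Type*} [Field 𝕜] [LinearOrder 𝕜] [IsStrictOrderedRing 𝕜] {B : Finset J}
  {a : J → 𝕜}

theorem exists_add_mul_mem_Icc_of_mem_Ioo {F : Finset J} {m : J → 𝕜}
    (ha : ∀ j ∈ F, a j ∈ Set.Ioo 0 1) (hm : ∃ j ∈ F, m j ≠ 0) :
    ∃ s : 𝕜, (∀ j ∈ F, a j + s * m j ∈ Set.Icc 0 1) ∧
      ∃ j ∈ F, a j + s * m j = 0 ∨ a j + s * m j = 1 := by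
  obtain ⟨j₀, hj₀, hmj₀⟩ := hm
  set P := {j ∈ F | m j ≠ 0}
  have hP : P.Nonempty := ⟨j₀, mem_filter.2 ⟨hj₀, hmj₀⟩⟩
  -- the largest `s` for which coordinate `j` stays in `[0, 1]`
  set step : J → 𝕜 := fun j => if 0 < m j then (1 - a j) / m j else -a j / m j
  have hstep : ∀ j ∈ P, 0 < step j := by
    intro j hj
    obtain ⟨hjF, hmj⟩ := mem_filter.1 hj
    obtain ⟨h0, h1⟩ := ha j hjF
    rcases hmj.lt_or_gt with hneg | hpos
    · simp only [step, if_neg hneg.not_gt]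
      exact div_pos_of_neg_of_neg (by linarith) hneg
    · simp only [step, if_pos hpos]
      exact div_pos (by linarith) hpos
  set s := P.inf' hP step
  have hs : 0 < s := (lt_inf'_iff hP).2 hstep
  refine ⟨s, fun j hj => ?_, ?_⟩
  · obtain ⟨h0, h1⟩ := ha j hj
    rcases lt_trichotomy (m j) 0 with hneg | hzero | hpos
    · have hle : s ≤ -a j / m j := by
        simpa [step, hneg.not_gt] using inf'_le step (mem_filter.2 ⟨hj, hneg.ne⟩)
      have := (le_div_iff_of_neg hneg).1 hle
      constructor <;> nlinarith
    · simp only [hzero, mul_zero, add_zero]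
      exact ⟨h0.le, h1.le⟩
    · have hle : s ≤ (1 - a j) / m j := by
        simpa [step, hpos] using inf'_le step (mem_filter.2 ⟨hj, hpos.ne'⟩)
      have := (le_div_iff₀ hpos).1 hle
      constructor <;> nlinarith
  · obtain ⟨j, hj, hsj⟩ := exists_mem_eq_inf' hP step
    obtain ⟨hjF, hmj⟩ := mem_filter.1 hj
    refine ⟨j, hjF, ?_⟩
    rw [show s = step j from hsj]
    by_cases hpos : 0 < m j
    · right
      simp only [step, if_pos hpos]
      field_simp
      ring
    · left
      simp only [step, if_neg hpos]
      field_simp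
      ring

theorem exists_eq_zero_of_sum_le {m : ℕ} (hm : 0 < m) (ha : ∀ j ∈ B, a j ∈ Set.Icc 0 1)
    (hfrac : #{j ∈ B | a j ∈ Set.Ioo 0 1} ≤ m) (hsum : ∑ j ∈ B, a j ≤ #B - m) :
    ∃ j ∈ B, a j = 0 := by
  by_contra! hne
  set F := {j ∈ B | a j ∈ Set.Ioo 0 1}
  have hF : ∑ j ∈ F, (1 - a j) = ∑ j ∈ B, (1 - a j) :=
    sum_filter_of_ne fun j hj h1 =>
      ⟨(ha j hj).1.lt_of_ne (hne j hj).symm, (ha j hj).2.lt_of_ne fun h => h1 (by simp [h])⟩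
  have hlt : ∑ j ∈ F, (1 - a j) < m := by
    rcases F.eq_empty_or_nonempty with h | h
    · simpa [h] using hm
    · calc ∑ j ∈ F, (1 - a j) < ∑ j ∈ F, (1 : 𝕜) :=
            sum_lt_sum_of_nonempty h fun j hj => by linarith [(mem_filter.1 hj).2.1]
        _ ≤ m := by simpa using hfrac
  rw [hF, sum_sub_distrib, sum_const, nsmul_one] at hlt
  linarith

variable {E : Type*} [AddCommGroup E] [Module 𝕜 E] [FiniteDimensional 𝕜 E] {u : J → E}

theorem exists_card_filter_mem_Ioo_lt (ha : ∀ j ∈ B, a j ∈ Set.Icc 0 1)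
    (hB : finrank 𝕜 E < #{j ∈ B | a j ∈ Set.Ioo 0 1}) :
    ∃ a' : J → 𝕜, (∀ j ∈ B, a' j ∈ Set.Icc 0 1) ∧
      ∑ j ∈ B, a' j • u j = ∑ j ∈ B, a j • u j ∧
      #{j ∈ B | a' j ∈ Set.Ioo 0 1} < #{j ∈ B | a j ∈ Set.Ioo 0 1} := by
  classical
  set F := {j ∈ B | a j ∈ Set.Ioo 0 1}
  obtain ⟨m, hmu, hm⟩ : ∃ m : J → 𝕜, ∑ j ∈ F, m j • u j = 0 ∧ ∃ j ∈ F, m j ≠ 0 :=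
    not_linearIndepOn_finset_iff.1 fun hli =>
      hB.not_ge (by simpa using hli.fintype_card_le_finrank)
  obtain ⟨s, hbox, j₀, hj₀, hj₀s⟩ :=
    exists_add_mul_mem_Icc_of_mem_Ioo (fun j hj => (mem_filter.1 hj).2) hm
  set a' : J → 𝕜 := fun j => if j ∈ F then a j + s * m j else a j
  refine ⟨a', fun j hj => ?_, ?_, card_lt_card ⟨fun j hj => ?_, fun hsub => ?_⟩⟩
  · by_cases h : j ∈ F
    · simpa [a', h] using hbox j h
    · simpa [a', h] using ha j hj
  · calc ∑ j ∈ B, a' j • u j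
        = ∑ j ∈ B, (a j • u j + if j ∈ F then s • m j • u j else 0) :=
          sum_congr rfl fun j _ => by by_cases h : j ∈ F <;> simp [a', h, add_smul, mul_smul]
      _ = ∑ j ∈ B, a j • u j + s • ∑ j ∈ F, m j • u j := by
          rw [sum_add_distrib, sum_ite_mem, inter_eq_right.2 (filter_subset _ _), smul_sum]
      _ = ∑ j ∈ B, a j • u j := by rw [hmu, smul_zero, add_zero]
  · obtain ⟨hjB, hj⟩ := mem_filter.1 hj
    by_contra h
    simp only [a', h, if_false] at hj
    exact h (mem_filter.2 ⟨hjB, hj⟩)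
  · have hj₀F : j₀ ∈ F := hj₀
    have := (mem_filter.1 (hsub hj₀F)).2
    simp only [a', hj₀F, if_true] at this
    rcases hj₀s with h | h <;> simp [h] at this

theorem exists_card_filter_mem_Ioo_le_finrank (ha : ∀ j ∈ B, a j ∈ Set.Icc 0 1) :
    ∃ a' : J → 𝕜, (∀ j ∈ B, a' j ∈ Set.Icc 0 1) ∧
      ∑ j ∈ B, a' j • u j = ∑ j ∈ B, a j • u j ∧
      #{j ∈ B | a' j ∈ Set.Ioo 0 1} ≤ finrank 𝕜 E := by
  induction hn : #{j ∈ B | a j ∈ Set.Ioo 0 1} using Nat.strong_induction_on generalizing a with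
  | _ n ih =>
    by_cases hle : n ≤ finrank 𝕜 E
    · exact ⟨a, ha, rfl, hn ▸ hle⟩
    obtain ⟨a₁, ha₁, hsum₁, hlt⟩ := exists_card_filter_mem_Ioo_lt (u := u) ha (hn ▸ not_le.1 hle)
    obtain ⟨a₂, ha₂, hsum₂, hle₂⟩ := ih _ (hn ▸ hlt) ha₁ rfl
    exact ⟨a₂, ha₂, hsum₂.trans hsum₁, hle₂⟩

end Vertex

section Steinitz

variable {E J : Type*} [NormedAddCommGroup E] [NormedSpace ℝ E]

def SteinitzFeasible (v : J → E) (B : Finset J) : Prop :=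
  ∃ a : J → ℝ, (∀ j ∈ B, a j ∈ Set.Icc 0 1) ∧ (#B : ℝ) - finrank ℝ E ≤ ∑ j ∈ B, a j ∧
    ∑ j ∈ B, a j • v j = 0

variable {v : J → E} {B : Finset J} {c : ℝ}

theorem SteinitzFeasible.norm_sum_le (h : SteinitzFeasible v B) (hc : 0 ≤ c)
    (hv : ∀ j ∈ B, ‖v j‖ ≤ c) : ‖∑ j ∈ B, v j‖ ≤ finrank ℝ E * c := by
  obtain ⟨a, ha, hsum, hzero⟩ := h
  calc ‖∑ j ∈ B, v j‖ = ‖∑ j ∈ B, (1 - a j) • v j‖ := by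
        simp [sub_smul, sum_sub_distrib, hzero]
    _ ≤ ∑ j ∈ B, (1 - a j) * c := norm_sum_le_of_le _ fun j hj => by
        have h1 : 0 ≤ 1 - a j := sub_nonneg.2 (ha j hj).2
        rw [norm_smul, Real.norm_of_nonneg h1]
        exact mul_le_mul_of_nonneg_left (hv j hj) h1
    _ ≤ finrank ℝ E * c := by
        rw [← sum_mul, sum_sub_distrib, sum_const, nsmul_one]
        gcongr
        linarith

theorem steinitzFeasible_of_card_le (v : J → E) (hB : #B ≤ finrank ℝ E) :
    SteinitzFeasible v B :=
  ⟨0, fun _ _ => by simp, by simpa using hB, by simp⟩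

theorem steinitzFeasible_of_sum_eq_zero (hv : ∑ j ∈ B, v j = 0) : SteinitzFeasible v B := by
  rcases le_or_gt #B (finrank ℝ E) with hB | hB
  · exact steinitzFeasible_of_card_le v hB
  have hB' : (finrank ℝ E : ℝ) < #B := by exact_mod_cast hB
  have hpos : (0 : ℝ) < #B := by linarith [(finrank ℝ E).cast_nonneg (α := ℝ)]
  refine ⟨fun _ => 1 - finrank ℝ E / #B, fun _ _ => ⟨?_, ?_⟩, ?_, ?_⟩
  · rw [sub_nonneg, div_le_one hpos]
    exact hB'.le
  · simp only [sub_le_self_iff]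
    positivity
  · simp [mul_div_cancel₀ _ hpos.ne']
  · rw [← smul_sum, hv, smul_zero]

theorem SteinitzFeasible.exists_erase [FiniteDimensional ℝ E] [DecidableEq J]
    (h : SteinitzFeasible v B) (hB : B.Nonempty) :
    ∃ i ∈ B, SteinitzFeasible v (B.erase i) := by
  set d := finrank ℝ E
  rcases le_or_gt #B d with hle | hlt
  · obtain ⟨i, hi⟩ := hB
    exact ⟨i, hi, steinitzFeasible_of_card_le v (card_erase_le.trans hle)⟩
  obtain ⟨a, ha, hsum, hzero⟩ := h
  have hlt' : (d : ℝ) + 1 ≤ #B := by exact_mod_cast hlt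
  set ρ := (#B - (d + 1)) / ∑ j ∈ B, a j
  have hρ : ρ ∈ Set.Icc 0 1 := ⟨div_nonneg (by linarith) (by linarith),
    div_le_one_of_le₀ (by linarith) (by linarith)⟩
  obtain ⟨b, hb, hbsum, hfrac⟩ := exists_card_filter_mem_Ioo_le_finrank
    (u := fun j => ((1 : ℝ), v j)) (a := fun j => ρ * a j) (B := B)
    fun j hj => ⟨mul_nonneg hρ.1 (ha j hj).1, mul_le_one₀ hρ.2 (ha j hj).1 (ha j hj).2⟩
  rw [finrank_prod, finrank_self, add_comm] at hfrac
  have hb₁ : ∑ j ∈ B, b j = #B - (d + 1) := by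
    have := congrArg Prod.fst hbsum
    simp only [Prod.fst_sum, Prod.smul_mk, smul_eq_mul, mul_one] at this
    rw [this, ← mul_sum, div_mul_cancel₀ _ (by linarith)]
  have hb₂ : ∑ j ∈ B, b j • v j = 0 := by
    have := congrArg Prod.snd hbsum
    simp only [Prod.snd_sum, Prod.smul_mk, mul_smul, ← smul_sum, hzero, smul_zero] at this
    exact this
  obtain ⟨i, hi, hbi⟩ := exists_eq_zero_of_sum_le (m := d + 1) d.succ_pos hb hfrac
    (by rw [hb₁]; push_cast; rfl)
  refine ⟨i, hi, b, fun j hj => hb j (mem_of_mem_erase hj), ?_, ?_⟩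
  · rw [sum_erase _ hbi, hb₁, card_erase_of_mem hi, Nat.cast_pred hB.card_pos]
    linarith
  · rwa [sum_erase _ (by simp [hbi])]

theorem SteinitzFeasible.exists_injective_norm_sum_Iic_le [FiniteDimensional ℝ E] [DecidableEq J]
    (h : SteinitzFeasible v B) (hv : ∀ j ∈ B, ‖v j‖ ≤ c) {n : ℕ} (hn : #B = n) :
    ∃ f : Fin n → J, Function.Injective f ∧ univ.image f = B ∧
      ∀ k, ‖∑ l ∈ Iic k, v (f l)‖ ≤ finrank ℝ E * c := by
  induction n generalizing B with
  | zero =>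
    refine ⟨Fin.elim0, fun k => k.elim0, ?_, fun k => k.elim0⟩
    simp_all [card_eq_zero]
  | succ n ih =>
    obtain ⟨i, hi, hfeas⟩ := h.exists_erase (card_pos.1 (by omega))
    obtain ⟨f, hinj, himage, hpre⟩ := ih hfeas (fun j hj => hv j (mem_of_mem_erase hj))
      (by rw [card_erase_of_mem hi, hn]; rfl)
    have hinj' : Function.Injective (Fin.snoc f i : Fin (n + 1) → J) :=
      Fin.snoc_injective_of_injective hinj fun ⟨k, hk⟩ =>
        notMem_erase i B (himage ▸ hk ▸ mem_image_of_mem f (mem_univ k))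
    have himage' : univ.image (Fin.snoc f i : Fin (n + 1) → J) = B := by
      rw [← coe_inj, coe_image, coe_univ, Set.image_univ, Fin.range_snoc, ← Set.image_univ,
        ← coe_univ, ← coe_image, himage, ← coe_insert, insert_erase hi]
    refine ⟨Fin.snoc f i, hinj', himage', fun k => ?_⟩
    induction k using Fin.lastCases with
    | last =>
      rw [← Fin.top_eq_last, Iic_top, ← sum_image fun k _ l _ hkl => hinj' hkl, himage']
      exact h.norm_sum_le ((norm_nonneg _).trans (hv i hi)) hv
    | cast k => simpa [Fin.sum_Iic_castSucc] using hpre k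

theorem exists_injective_norm_sum_Iic_le_of_sum_eq_zero [FiniteDimensional ℝ E] [DecidableEq J]
    (hv₀ : ∑ j ∈ B, v j = 0) (hv : ∀ j ∈ B, ‖v j‖ ≤ c) {n : ℕ} (hn : #B = n) :
    ∃ f : Fin n → J, Function.Injective f ∧ univ.image f = B ∧
      ∀ k, ‖∑ l ∈ Iic k, v (f l)‖ ≤ finrank ℝ E * c :=
  (steinitzFeasible_of_sum_eq_zero hv₀).exists_injective_norm_sum_Iic_le hv hn

theorem exists_injective_norm_sum_Iic_sub_le [FiniteDimensional ℝ E] [DecidableEq J]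
    (hv : ∀ j ∈ B, ‖v j‖ ≤ c) {n : ℕ} (hn : #B = n) :
    ∃ f : Fin n → J, Function.Injective f ∧ univ.image f = B ∧
      ∀ k : Fin n, ‖∑ l ∈ Iic k, v (f l) - (((k : ℝ) + 1) / n) • ∑ j ∈ B, v j‖ ≤
        2 * finrank ℝ E * c := by
  set μ := (n : ℝ)⁻¹ • ∑ j ∈ B, v j with hμ_def
  have hμ : ∀ j ∈ B, ‖μ‖ ≤ c := fun j hj => by
    have hpos : (0 : ℝ) < n := by exact_mod_cast hn ▸ card_pos.2 ⟨j, hj⟩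
    rw [norm_smul, norm_inv, Real.norm_natCast, inv_mul_le_iff₀ hpos, ← hn, ← nsmul_eq_mul]
    exact (norm_sum_le_of_le B hv).trans_eq (sum_const c)
  have hsum : ∑ j ∈ B, (v j - μ) = 0 := by
    rcases n.eq_zero_or_pos with h0 | hpos
    · simp [card_eq_zero.1 (hn.trans h0)]
    rw [sum_sub_distrib, sum_const, hn, hμ_def, ← Nat.cast_smul_eq_nsmul ℝ, smul_smul,
      mul_inv_cancel₀ (by positivity), one_smul, sub_self]
  obtain ⟨f, hinj, himage, hpre⟩ := exists_injective_norm_sum_Iic_le_of_sum_eq_zero hsum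
    (c := 2 * c) (fun j hj => (norm_sub_le _ _).trans (by linarith [hv j hj, hμ j hj])) hn
  refine ⟨f, hinj, himage, fun k => ?_⟩
  calc ‖∑ l ∈ Iic k, v (f l) - (((k : ℝ) + 1) / n) • ∑ j ∈ B, v j‖
      = ‖∑ l ∈ Iic k, (v (f l) - μ)‖ := by
        rw [sum_sub_distrib, sum_const, Fin.card_Iic, hμ_def, ← Nat.cast_smul_eq_nsmul ℝ,
          smul_smul, div_eq_mul_inv]
        push_cast
        rfl
    _ ≤ 2 * finrank ℝ E * c := (hpre k).trans_eq (by ring)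

end Steinitz

theorem steinitz_multichoice_ordering_general
    {ι : Type*} [DecidableEq ι]
    (d Δ t : ℕ)
    (S : Finset ι)
    (A : ι → Fin d → ℤ)
    (hA : ∀ i ∈ S, ∀ r : Fin d, |A i r| ≤ (Δ : ℤ))
    (x : ι → ℕ)
    (hx : ∑ i ∈ S, x i = t)
    (w : Fin d → ℤ)
    (hw : ∀ r : Fin d, w r = ∑ i ∈ S, (x i : ℤ) * A i r) :
    ∃ σ : Fin t → ι,
      (∀ k : Fin t, σ k ∈ S) ∧
      (∀ i ∈ S, (Finset.univ.filter (fun k : Fin t => σ k = i)).card = x i) ∧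
      (∀ k : Fin t, ∀ r : Fin d,
        |((∑ l ∈ Finset.Iic k, A (σ l) r : ℤ) : ℚ)
            - (((k : ℕ) + 1 : ℚ) / (t : ℚ)) * (w r : ℚ)| ≤ 2 * d * Δ) := by
  -- the multiset in which `i` occurs `x i` times, as a set of pairs `(i, m)` with `m < x i`
  set B := S.sigma fun i => range (x i)
  have hB : #B = t := by simp [B, hx]
  set u : (Σ _ : ι, ℕ) → Fin d → ℝ := fun p r => A p.1 r
  have hu : ∀ p ∈ B, ‖u p‖ ≤ Δ := fun p hp =>
    (pi_norm_le_iff_of_nonneg (by positivity)).2 fun r => by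
      simpa [u] using (Int.cast_le (R := ℝ)).2 (hA p.1 (mem_sigma.1 hp).1 r)
  have huw : ∀ r, (∑ p ∈ B, u p) r = w r := fun r => by simp [u, B, sum_sigma, hw]
  obtain ⟨f, hinj, himage, hpre⟩ := exists_injective_norm_sum_Iic_sub_le hu hB
  have hfB : ∀ k, f k ∈ B := fun k => himage ▸ mem_image_of_mem f (mem_univ k)
  refine ⟨fun k => (f k).1, fun k => (mem_sigma.1 (hfB k)).1, fun i hi => ?_, fun k r => ?_⟩
  · change #{k | (f k).1 = i} = x i
    rw [← card_image_of_injective _ hinj, ← filter_image (p := fun q : (Σ _ : ι, ℕ) => q.1 = i),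
      himage, card_filter, sum_sigma]
    simp [apply_ite card, hi]
  · have hk := (norm_le_pi_norm _ r).trans ((hpre k).trans_eq (by rw [finrank_fin_fun]))
    simp only [Pi.sub_apply, Pi.smul_apply, huw, Finset.sum_apply, u, smul_eq_mul,
      Real.norm_eq_abs] at hk
    rw [← Rat.cast_le (K := ℝ)]
    push_cast
    exact hk

/-- Application of the Steinitz Lemma: given columns `A i ∈ ℤ^d` of infinity norm
at most `Δ` and multiplicities `x i` summing to `t`, with `w = ∑ i, x i • A i`,
there is an ordering `σ` of the multiset (each `i ∈ S` occurring exactly `x i`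
times) whose prefix sums stay within `2dΔ` (in infinity norm) of the line
segment `(k/t)·w`. -/
theorem steinitz_multichoice_ordering
    {ι : Type*} [DecidableEq ι]
    (d Δ t : ℕ) (hd : 1 ≤ d) (hΔ : 1 ≤ Δ) (ht : 1 ≤ t)
    (S : Finset ι)
    (A : ι → Fin d → ℤ)
    (hA : ∀ i ∈ S, ∀ r : Fin d, |A i r| ≤ (Δ : ℤ))
    (x : ι → ℕ)
    (hx : ∑ i ∈ S, x i = t)
    (w : Fin d → ℤ)
    (hw : ∀ r : Fin d, w r = ∑ i ∈ S, (x i : ℤ) * A i r) :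
    ∃ σ : Fin t → ι,
      (∀ k : Fin t, σ k ∈ S) ∧
      (∀ i ∈ S, (Finset.univ.filter (fun k : Fin t => σ k = i)).card = x i) ∧
      (∀ k : Fin t, ∀ r : Fin d,
        |((∑ l ∈ Finset.Iic k, A (σ l) r : ℤ) : ℚ)
            - (((k : ℕ) + 1 : ℚ) / (t : ℚ)) * (w r : ℚ)| ≤ 2 * d * Δ) :=
  steinitz_multichoice_ordering_general d Δ t S A hA x hx w hw
end

section
/- Let A ∈ ℤ^{d×n} with |A_{ij}| ≤ Δ, let P be a partition of {1,…,n}, and for each S ∈ P let t_S ≥ 1 be an integer; set t = ∑_{S∈P} t_S. Let x ∈ ℕ^n satisfy ∑_{i∈S} x_i = t_S for all S ∈ P, and set b = A x. Let S_1,…,S_t ∈ P and rationals d_1 ≤ ⋯ ≤ d_t be a breakpoint sequence, i.e., for each S ∈ P and each r ∈ {1,…,t_S} there is exactly one k ∈ {1,…,t} with S_k = S and d_k = r/t_S. Then there exists a sequence σ : {1,…,t} → {1,…,n} such that σ(k) ∈ S_k for every k, each index i ∈ {1,…,n} occurs exactly x_i times in σ, and for every k = 1,…,t the partial solution x'(k)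 ∈ ℕ^n defined by x'(k)_i = |{l ≤ k : σ(l) = i}| satisfies ‖A·x'(k) − d_k·b‖_∞ ≤ 4dΔ·|P|. -/
/-!
Within a part `S`, list the `t_S` columns of the solution (column `i` repeated `x_i` times) so that
every prefix of length `c` is within `2dΔ` of `c / t_S` times the total of the part: this is the
Steinitz lemma with constant `d`, applied to the columns minus their mean. The breakpoint sequence
then interleaves the parts: after step `k`, part `S` has used `c_S` of its columns with
`|c_S - d_k t_S| ≤ 1`, which costs another `Δ` per part, so the error is at most
`(2d + 1)Δ|P| ≤ 4dΔ|P|`.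

The Steinitz lemma is proved backwards (Grinberg–Sevastyanov). If `|A| > d` and `μ ∈ [0, 1]^A`
satisfies `∑ μ = |A| - d` and `∑ μ_i v_i = 0`, rescale `μ` to total `|A| - 1 - d` and round it,
keeping `∑ μ` and `∑ μ_i v_i`, until at most `d + 1` entries are fractional; some entry is then
`0`, and dropping it gives such weights on a smaller set. For every set of the resulting chain,
`∑_{i ∈ A} v_i = ∑ (1 - μ_i) v_i` has entries at most `d · max |v|`.
-/

open Finset Module

lemma Multiset.abs_sum_map_le {α 𝕜 : Type*} [Field 𝕜] [LinearOrder 𝕜] [IsStrictOrderedRing 𝕜]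
    {f : α → 𝕜} {B : 𝕜} (M : Multiset α) (hf : ∀ a ∈ M, |f a| ≤ B) :
    |(M.map f).sum| ≤ Multiset.card M * B := by
  have := Multiset.sum_le_card_nsmul ((M.map f).map abs) B (by simpa using hf)
  simpa [mul_comm] using Multiset.abs_sum_le_sum_abs.trans this

def Finset.withMultiplicity {ι : Type*} (S : Finset ι) (x : ι → ℕ) : Multiset ι :=
  S.val.bind fun i => Multiset.replicate (x i) i

section WithMultiplicity

variable {ι : Type*} {S : Finset ι} {x : ι → ℕ}

@[simp]
lemma Finset.card_withMultiplicity : Multiset.card (S.withMultiplicity x) = ∑ i ∈ S, x i := by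
  simp [withMultiplicity, Multiset.card_bind]

@[simp]
lemma Finset.count_withMultiplicity [DecidableEq ι] (a : ι) :
    (S.withMultiplicity x).count a = if a ∈ S then x a else 0 := by
  simp [withMultiplicity, Multiset.count_bind, Multiset.count_replicate]

lemma Finset.sum_map_withMultiplicity {M : Type*} [AddCommMonoid M] (f : ι → M) :
    ((S.withMultiplicity x).map f).sum = ∑ i ∈ S, x i • f i := by
  simp [withMultiplicity, Multiset.map_bind, Multiset.sum_bind]

lemma Finset.mem_of_mem_withMultiplicity {a : ι} (h : a ∈ S.withMultiplicity x) : a ∈ S := by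
  obtain ⟨i, hi, ha⟩ := Multiset.mem_bind.mp h
  exact Multiset.eq_of_mem_replicate ha ▸ hi

end WithMultiplicity

lemma Finset.sum_sum_of_existsUnique_mem {ι M : Type*} [Fintype ι] [AddCommMonoid M]
    {P : Finset (Finset ι)} (hP : ∀ i, ∃! S, S ∈ P ∧ i ∈ S) (f : ι → M) :
    ∑ S ∈ P, ∑ i ∈ S, f i = ∑ i, f i := by
  classical
  rw [sum_comm' (t' := univ) (s' := fun i => {S ∈ P | i ∈ S}) (by simp)]
  refine sum_congr rfl fun i _ => ?_
  obtain ⟨S, hS, huniq⟩ := hP i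
  rw [show {S ∈ P | i ∈ S} = {S} from eq_singleton_iff_unique_mem.mpr
    ⟨mem_filter.mpr hS, fun S' hS' => huniq S' (mem_filter.mp hS')⟩, sum_singleton]

lemma abs_sub_mul_le_add {𝕜 : Type*} [Field 𝕜] [LinearOrder 𝕜] [IsStrictOrderedRing 𝕜]
    {u T c q m ε Δ : 𝕜} (hΔ : 0 ≤ Δ) (hu : |u - c / m * T| ≤ ε) (hT : |T| ≤ m * Δ)
    (hc : |c - q * m| ≤ 1) : |u - q * T| ≤ ε + Δ := by
  have hshift : |(c / m - q) * T| ≤ Δ := by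
    rcases eq_or_ne m 0 with rfl | hm
    · have : T = 0 := by simpa using hT
      simpa [this] using hΔ
    · have hT' : |T| ≤ |m| * Δ := hT.trans (mul_le_mul_of_nonneg_right (le_abs_self m) hΔ)
      have hm' : 0 < |m| := abs_pos.mpr hm
      calc |(c / m - q) * T| = |c - q * m| * |T| / |m| := by
            rw [← abs_mul, ← abs_div, div_sub' hm, div_mul_eq_mul_div, mul_comm m q]
        _ ≤ 1 * (|m| * Δ) / |m| := by gcongr
        _ = Δ := by field_simp
  calc |u - q * T| = |(u - c / m * T) + (c / m - q) * T| := by ring_nf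
    _ ≤ ε + Δ := (abs_add_le _ _).trans (add_le_add hu hshift)

section Rounding

variable {𝕜 : Type*} [Field 𝕜] [LinearOrder 𝕜] [IsStrictOrderedRing 𝕜]

/-- The largest `s` with `a + s * g ∈ [0, 1]`, for `a ∈ [0, 1]`. -/
def maxStep (a g : 𝕜) : 𝕜 := if 0 < g then (1 - a) / g else -a / g

lemma maxStep_nonneg {a : 𝕜} (ha : a ∈ Set.Icc 0 1) (g : 𝕜) : 0 ≤ maxStep a g := by
  unfold maxStep
  split_ifs with hg
  · exact div_nonneg (by linarith [ha.2]) hg.le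
  · exact div_nonneg_of_nonpos (by linarith [ha.1]) (not_lt.mp hg)

lemma add_mul_mem_Icc_of_le_maxStep {a g s : 𝕜} (ha : a ∈ Set.Icc 0 1) (hs₀ : 0 ≤ s)
    (hs : s ≤ maxStep a g) : a + s * g ∈ Set.Icc 0 1 := by
  obtain ⟨ha₀, ha₁⟩ := ha
  unfold maxStep at hs
  rcases lt_trichotomy g 0 with hg | rfl | hg
  · rw [if_neg hg.not_gt, le_div_iff_of_neg hg] at hs
    constructor <;> nlinarith
  · simpa using And.intro ha₀ ha₁
  · rw [if_pos hg, le_div_iff₀ hg] at hs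
    constructor <;> nlinarith

lemma add_maxStep_mul_notMem_Ioo (a : 𝕜) {g : 𝕜} (hg : g ≠ 0) :
    a + maxStep a g * g ∉ Set.Ioo 0 1 := by
  unfold maxStep
  split_ifs <;> simp [div_mul_cancel₀ _ hg]

variable {ι V : Type*} [AddCommGroup V] [Module 𝕜 V] [FiniteDimensional 𝕜 V]

theorem exists_card_fractional_lt (v : ι → V) {A : Finset ι} {μ : ι → 𝕜}
    (hμ : ∀ i ∈ A, μ i ∈ Set.Icc 0 1) (hA : finrank 𝕜 V < #{i ∈ A | μ i ∈ Set.Ioo 0 1}) :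
    ∃ μ' : ι → 𝕜, (∀ i ∈ A, μ' i ∈ Set.Icc 0 1) ∧
      ∑ i ∈ A, μ' i • v i = ∑ i ∈ A, μ i • v i ∧
      #{i ∈ A | μ' i ∈ Set.Ioo 0 1} < #{i ∈ A | μ i ∈ Set.Ioo 0 1} := by
  set F := {i ∈ A | μ i ∈ Set.Ioo 0 1}
  have hdep : ¬ LinearIndepOn 𝕜 v (F : Set ι) := fun h => by
    simpa using (h.fintype_card_le_finrank).trans_lt hA
  obtain ⟨g, hg, i₁, hi₁, hgi₁⟩ : ∃ g : ι → 𝕜, ∑ i ∈ F, g i • v i = 0 ∧ ∃ i ∈ F, g i ≠ 0 := by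
    simpa [linearIndepOn_finset_iff] using hdep
  -- move along the relation `g`, restricted to `F`, until a first coordinate becomes integral
  set γ : ι → 𝕜 := fun i => if μ i ∈ Set.Ioo 0 1 then g i else 0
  have hγ : ∀ i ∈ A, γ i ≠ 0 → i ∈ F ∧ γ i = g i := fun i hi h => by
    by_cases hF : μ i ∈ Set.Ioo 0 1 <;> simp_all [γ, F]
  set G := {i ∈ A | γ i ≠ 0}
  have hG : G.Nonempty := ⟨i₁, by simp_all [G, F, γ]⟩
  obtain ⟨i₀, hi₀, hmin⟩ := G.exists_min_image (fun i => maxStep (μ i) (γ i)) hG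
  set s := maxStep (μ i₀) (γ i₀)
  have hi₀A : i₀ ∈ A := (mem_filter.mp hi₀).1
  refine ⟨fun i => μ i + s * γ i, fun i hi => ?_, ?_, ?_⟩
  · by_cases hγi : γ i = 0
    · simpa [hγi] using hμ i hi
    · exact add_mul_mem_Icc_of_le_maxStep (hμ i hi) (maxStep_nonneg (hμ i₀ hi₀A) _)
        (hmin i (mem_filter.mpr ⟨hi, hγi⟩))
  · have : ∑ i ∈ A, γ i • v i = 0 := by
      simp only [γ, ite_smul, zero_smul, ← sum_filter]
      exact hg
    simp only [add_smul, sum_add_distrib, mul_smul, ← smul_sum, this, smul_zero, add_zero]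
  · refine card_lt_card ((ssubset_iff_of_subset fun i hi => ?_).mpr ⟨i₀, ?_, ?_⟩)
    · by_cases hγi : γ i = 0
      · simp only [mem_filter, hγi, mul_zero, add_zero] at hi
        exact mem_filter.mpr hi
      · exact (hγ i (mem_filter.mp hi).1 hγi).1
    · exact (hγ i₀ hi₀A (mem_filter.mp hi₀).2).1
    · simpa using fun _ => add_maxStep_mul_notMem_Ioo (μ i₀) (mem_filter.mp hi₀).2

theorem exists_card_fractional_le_finrank (v : ι → V) {A : Finset ι} {μ : ι → 𝕜}
    (hμ : ∀ i ∈ A, μ i ∈ Set.Icc 0 1) :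
    ∃ μ' : ι → 𝕜, (∀ i ∈ A, μ' i ∈ Set.Icc 0 1) ∧
      ∑ i ∈ A, μ' i • v i = ∑ i ∈ A, μ i • v i ∧
      #{i ∈ A | μ' i ∈ Set.Ioo 0 1} ≤ finrank 𝕜 V := by
  induction hn : #{i ∈ A | μ i ∈ Set.Ioo 0 1} using Nat.strong_induction_on generalizing μ with
  | _ n ih =>
    by_cases hle : n ≤ finrank 𝕜 V
    · exact ⟨μ, hμ, rfl, hn ▸ hle⟩
    obtain ⟨μ₁, hμ₁, hsum₁, hlt⟩ := exists_card_fractional_lt v hμ (hn ▸ not_le.mp hle)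
    obtain ⟨μ₂, hμ₂, hsum₂, hle₂⟩ := ih _ (hn ▸ hlt) hμ₁ rfl
    exact ⟨μ₂, hμ₂, hsum₂.trans hsum₁, hle₂⟩

end Rounding

section Steinitz

variable {𝕜 : Type*} [Field 𝕜] [LinearOrder 𝕜] [IsStrictOrderedRing 𝕜] {κ ι : Type*} [Fintype κ]

structure IsSteinitzWeight (v : ι → κ → 𝕜) (A : Finset ι) (μ : ι → 𝕜) : Prop where
  mem_Icc : ∀ i ∈ A, μ i ∈ Set.Icc 0 1
  sum_eq : ∑ i ∈ A, μ i = #A - Fintype.card κ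
  sum_smul_eq_zero : ∑ i ∈ A, μ i • v i = 0

variable {v : ι → κ → 𝕜} {A : Finset ι} {μ : ι → 𝕜} {B : 𝕜}

theorem IsSteinitzWeight.abs_sum_le (hμ : IsSteinitzWeight v A μ)
    (hv : ∀ i ∈ A, ∀ r, |v i r| ≤ B) (r : κ) : |∑ i ∈ A, v i r| ≤ Fintype.card κ * B := by
  have hcancel : ∑ i ∈ A, μ i * v i r = 0 := by
    simpa [Finset.sum_apply] using congrFun hμ.sum_smul_eq_zero r
  calc |∑ i ∈ A, v i r| = |∑ i ∈ A, (1 - μ i) * v i r| := by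
        simp [sub_mul, sum_sub_distrib, hcancel]
    _ ≤ ∑ i ∈ A, (1 - μ i) * B := by
        refine (abs_sum_le_sum_abs _ _).trans (sum_le_sum fun i hi => ?_)
        have h1 : 0 ≤ 1 - μ i := sub_nonneg.mpr (hμ.mem_Icc i hi).2
        rw [abs_mul, abs_of_nonneg h1]
        exact mul_le_mul_of_nonneg_left (hv i hi r) h1
    _ = Fintype.card κ * B := by
        rw [← sum_mul, sum_sub_distrib, hμ.sum_eq]
        simp

omit [Fintype κ] in
lemma sub_lt_sum_of_card_fractional_le {D : ℕ} (hμ : ∀ i ∈ A, μ i ∈ Set.Ioc 0 1)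
    (hD : #{i ∈ A | μ i ∈ Set.Ioo 0 1} ≤ D) (hD₀ : 0 < D) : (#A : 𝕜) - D < ∑ i ∈ A, μ i := by
  have hones : ∑ i ∈ A, (1 - μ i) = ∑ i ∈ A with μ i ∈ Set.Ioo 0 1, (1 - μ i) := by
    rw [sum_filter]
    refine sum_congr rfl fun i hi => ?_
    split_ifs with h
    · rfl
    · have := hμ i hi
      have : μ i = 1 := by
        by_contra hne
        exact h ⟨this.1, lt_of_le_of_ne this.2 hne⟩
      simp [this]
  have hfrac : ∑ i ∈ A with μ i ∈ Set.Ioo 0 1, (1 - μ i) < D := by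
    rcases (A.filter fun i => μ i ∈ Set.Ioo 0 1).eq_empty_or_nonempty with he | hne
    · rw [he, sum_empty]
      exact_mod_cast hD₀
    · calc _ < ∑ i ∈ A with μ i ∈ Set.Ioo 0 1, (1 : 𝕜) :=
            sum_lt_sum_of_nonempty hne fun i hi => by linarith [(mem_filter.mp hi).2.1]
        _ ≤ D := by
            rw [sum_const, nsmul_one]
            exact_mod_cast hD
  rw [sum_sub_distrib, sum_const, nsmul_one] at hones
  linarith

theorem IsSteinitzWeight.exists_erase [DecidableEq ι] (hμ : IsSteinitzWeight v A μ)
    (hA : Fintype.card κ < #A) : ∃ i ∈ A, ∃ μ', IsSteinitzWeight v (A.erase i) μ' := by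
  set d := Fintype.card κ
  have hdA : (d : 𝕜) + 1 ≤ #A := by exact_mod_cast hA
  have hpos : (0 : 𝕜) < #A - d := by linarith
  set c : 𝕜 := (#A - 1 - d) / (#A - d)
  have hc₀ : 0 ≤ c := div_nonneg (by linarith) hpos.le
  have hc₁ : c ≤ 1 := (div_le_one hpos).mpr (by linarith)
  -- rounding against the vectors `(1, v i)` keeps both `∑ μ` and `∑ μ • v` fixed
  obtain ⟨ν, hν, hsum, hfrac⟩ := exists_card_fractional_le_finrank (fun i => ((1 : 𝕜), v i))
    (μ := c • μ) (A := A) fun i hi =>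
      ⟨mul_nonneg hc₀ (hμ.mem_Icc i hi).1, mul_le_one₀ hc₁ (hμ.mem_Icc i hi).1 (hμ.mem_Icc i hi).2⟩
  have hν₁ : ∑ i ∈ A, ν i = #A - 1 - d := by
    have := congrArg Prod.fst hsum
    simp only [Prod.fst_sum, Prod.smul_fst, smul_eq_mul, mul_one, Pi.smul_apply] at this
    rw [this, ← mul_sum, hμ.sum_eq, div_mul_cancel₀ _ hpos.ne']
  have hν₂ : ∑ i ∈ A, ν i • v i = 0 := by
    have := congrArg Prod.snd hsum
    simp only [Prod.snd_sum, Prod.smul_snd, Pi.smul_apply, smul_eq_mul, mul_smul] at this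
    rw [this, ← smul_sum, hμ.sum_smul_eq_zero, smul_zero]
  have hrank : finrank 𝕜 (𝕜 × (κ → 𝕜)) = d + 1 := by simp [d, add_comm]
  obtain ⟨i₀, hi₀, hνi₀⟩ : ∃ i ∈ A, ν i = 0 := by
    by_contra! h
    have := sub_lt_sum_of_card_fractional_le
      (fun i hi => ⟨lt_of_le_of_ne (hν i hi).1 (h i hi).symm, (hν i hi).2⟩)
      (hfrac.trans_eq hrank) d.succ_pos
    push_cast at this
    linarith
  refine ⟨i₀, hi₀, ν, fun i hi => hν i (mem_of_mem_erase hi), ?_, ?_⟩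
  · rw [sum_erase A hνi₀, hν₁, card_erase_of_mem hi₀, Nat.cast_pred (card_pos.mpr ⟨i₀, hi₀⟩)]
  · rw [sum_erase A (by simp [hνi₀]), hν₂]

theorem exists_list_abs_sum_take_le_of_isSteinitzWeight [DecidableEq ι] (hB : 0 ≤ B)
    (hv : ∀ i ∈ A, ∀ r, |v i r| ≤ B) (hA : #A ≤ Fintype.card κ ∨ ∃ μ, IsSteinitzWeight v A μ) :
    ∃ L : List ι, (L : Multiset ι) = A.val ∧
      ∀ c r, |((L.take c).map (v · r)).sum| ≤ Fintype.card κ * B := by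
  induction A using Finset.strongInduction with
  | H A ih =>
  rcases le_or_gt #A (Fintype.card κ) with hsmall | hlarge
  · refine ⟨A.toList, A.coe_toList, fun c r => ?_⟩
    have hlen : (A.toList.take c).length ≤ Fintype.card κ := by
      grind [List.length_take, length_toList]
    calc _ ≤ ((A.toList.take c).length : 𝕜) * B := by
          simpa using Multiset.abs_sum_map_le (A.toList.take c : Multiset ι)
            fun i hi => hv i (mem_toList.mp (List.mem_of_mem_take hi)) r
      _ ≤ Fintype.card κ * B := by gcongr
  · obtain ⟨μ, hμ⟩ := hA.resolve_left hlarge.not_ge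
    obtain ⟨i₀, hi₀, μ', hμ'⟩ := hμ.exists_erase hlarge
    obtain ⟨L, hL, hbound⟩ := ih _ (erase_ssubset hi₀) (fun i hi => hv i (mem_of_mem_erase hi))
      (Or.inr ⟨μ', hμ'⟩)
    have hLA : ((L ++ [i₀] : List ι) : Multiset ι) = A.val := by
      rw [← Multiset.coe_add, hL, erase_val, Multiset.coe_singleton, add_comm,
        Multiset.singleton_add, Multiset.cons_erase hi₀]
    refine ⟨L ++ [i₀], hLA, fun c r => ?_⟩
    rcases le_or_gt c L.length with hc | hc
    · rw [List.take_append_of_le_length hc]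
      exact hbound c r
    · rw [List.take_of_length_le (by simp; omega), ← Multiset.sum_coe, ← Multiset.map_coe, hLA]
      exact hμ.abs_sum_le hv r

theorem exists_list_abs_sum_take_le {α : Type*} [DecidableEq α] (M : Multiset α) (v : α → κ → 𝕜)
    (hB : 0 ≤ B) (hv : ∀ a ∈ M, ∀ r, |v a r| ≤ B) (hM : ∀ r, (M.map (v · r)).sum = 0) :
    ∃ l : List α, (l : Multiset α) = M ∧
      ∀ c r, |((l.take c).map (v · r)).sum| ≤ Fintype.card κ * B := by
  classical
  have hsum : ∀ r, ∑ a : M, v a r = 0 := fun r =>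
    (sum_eq_multiset_sum _ _).trans
      ((congrArg Multiset.sum (Multiset.map_univ M (v · r))).trans (hM r))
  have hstart : #(univ : Finset M) ≤ Fintype.card κ ∨
      ∃ μ, IsSteinitzWeight (fun a : M => v a) univ μ := by
    refine or_iff_not_imp_left.mpr fun h => ?_
    set N : 𝕜 := (#(univ : Finset M) : 𝕜)
    have hN : (Fintype.card κ : 𝕜) < N := Nat.cast_lt.mpr (not_le.mp h)
    have hN₀ : 0 < N := (Nat.cast_nonneg _).trans_lt hN
    refine ⟨fun _ => (N - Fintype.card κ) / N, fun _ _ => ⟨?_, ?_⟩, ?_, ?_⟩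
    · exact div_nonneg (by linarith) hN₀.le
    · exact (div_le_one hN₀).mpr (by linarith)
    · rw [sum_const, nsmul_eq_mul, mul_div_cancel₀ _ hN₀.ne']
    · rw [← smul_sum]
      convert smul_zero _
      exact funext fun r => (sum_apply r _ _).trans (hsum r)
  obtain ⟨L, hL, hbound⟩ := exists_list_abs_sum_take_le_of_isSteinitzWeight
    (v := fun a : M => v a) hB (fun a _ r => hv a Multiset.coe_mem r) hstart
  refine ⟨L.map fun a : M => (a : α), ?_, fun c r => ?_⟩
  · rw [← Multiset.map_coe, hL, Multiset.map_univ_coe]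
  · rw [← List.map_take, List.map_map]
    exact hbound c r

theorem exists_list_abs_sum_take_sub_le {α : Type*} [DecidableEq α] (M : Multiset α)
    (v : α → κ → 𝕜) (hB : 0 ≤ B) (hv : ∀ a ∈ M, ∀ r, |v a r| ≤ B) :
    ∃ l : List α, (l : Multiset α) = M ∧ ∀ c ≤ Multiset.card M, ∀ r,
      |((l.take c).map (v · r)).sum - c / Multiset.card M * (M.map (v · r)).sum| ≤
        2 * Fintype.card κ * B := by
  set m : 𝕜 := (Multiset.card M : 𝕜)
  set T : κ → 𝕜 := fun r => (M.map (v · r)).sum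
  have hT : ∀ r, |T r / m| ≤ B := fun r => by
    rw [abs_div, Nat.abs_cast]
    exact div_le_of_le_mul₀ (Nat.cast_nonneg _) hB
      ((M.abs_sum_map_le fun a ha => hv a ha r).trans_eq (mul_comm _ _))
  set u : α → κ → 𝕜 := fun a r => v a r - T r / m
  have hu : ∀ a ∈ M, ∀ r, |u a r| ≤ 2 * B := fun a ha r => by
    linarith [abs_sub (v a r) (T r / m), hv a ha r, hT r]
  have hu₀ : ∀ r, (M.map (u · r)).sum = 0 := fun r => by
    rcases eq_or_ne M 0 with rfl | hM
    · simp
    · have : m ≠ 0 := by simpa [m] using hM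
      simp only [u, Multiset.sum_map_sub, Multiset.map_const', Multiset.sum_replicate, nsmul_eq_mul]
      rw [mul_div_cancel₀ _ this, sub_self]
  obtain ⟨l, hl, hbound⟩ := exists_list_abs_sum_take_le M u (by linarith) hu hu₀
  refine ⟨l, hl, fun c hc r => ?_⟩
  have hlen : (l.take c).length = c := by
    rw [List.length_take, ← Multiset.coe_card, hl]
    omega
  have hshift : ((l.take c).map (u · r)).sum = ((l.take c).map (v · r)).sum - c * (T r / m) := by
    simp only [u, ← Multiset.sum_coe, ← Multiset.map_coe, Multiset.sum_map_sub,
      Multiset.map_const', Multiset.sum_replicate, Multiset.coe_card, hlen, nsmul_eq_mul]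
  calc _ = |((l.take c).map (u · r)).sum| := by
        rw [hshift, mul_div_assoc', div_mul_eq_mul_div]
    _ ≤ Fintype.card κ * (2 * B) := hbound c r
    _ = 2 * Fintype.card κ * B := by ring

end Steinitz

lemma Finset.sum_card_filter_lt {ι M : Type*} [LinearOrder ι] [AddCommMonoid M] (s : Finset ι)
    (g : ℕ → M) : ∑ i ∈ s, g #{j ∈ s | j < i} = ∑ j ∈ range #s, g j := by
  refine Finset.induction_on_max s (by simp) fun a s ha ih => ?_
  have ha' : a ∉ s := fun h => lt_irrefl a (ha a h)
  rw [sum_insert ha', card_insert_of_notMem ha', sum_range_succ, add_comm, filter_insert,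
    if_neg (lt_irrefl a), filter_true_of_mem ha, ← ih]
  congr 1
  refine sum_congr rfl fun i hi => ?_
  rw [filter_insert, if_neg (ha i hi).not_gt]

lemma List.sum_range_getD {α M : Type*} [AddCommMonoid M] (l : List α) (f : α → M) (a : α)
    {c : ℕ} (hc : c ≤ l.length) :
    ∑ j ∈ Finset.range c, f (l.getD j a) = ((l.take c).map f).sum := by
  induction c with
  | zero => simp
  | succ c ih =>
    rw [Finset.sum_range_succ, ih (by omega), List.getD_eq_getElem _ _ (by omega), List.map_take,
      List.map_take, List.sum_take_succ _ _ (by simpa using hc), List.getElem_map]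

section Interleaving

variable {α β : Type*} [DecidableEq β] {t : ℕ}

def fiberRank (w : Fin t → β) (k : Fin t) : ℕ := #{l | w l = w k ∧ l < k}

lemma fiberRank_lt_card (w : Fin t → β) (k : Fin t) : fiberRank w k < #{l | w l = w k} :=
  card_lt_card <| (ssubset_iff_of_subset fun l hl => by simp_all).mpr ⟨k, by simp, by simp⟩

lemma sum_filter_fiberRank {M : Type*} [AddCommMonoid M] (w : Fin t → β) {u : Finset (Fin t)}
    (hu : IsLowerSet (u : Set (Fin t))) (S : β) (g : ℕ → M) :
    ∑ l ∈ u with w l = S, g (fiberRank w l) = ∑ j ∈ range #{l ∈ u | w l = S}, g j := by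
  rw [← sum_card_filter_lt]
  refine sum_congr rfl fun l hl => ?_
  obtain ⟨hlu, rfl⟩ := mem_filter.mp hl
  unfold fiberRank
  congr 2
  ext l'
  simp only [mem_filter, mem_univ, true_and]
  exact ⟨fun h => ⟨⟨hu h.2.le hlu, h.1⟩, h.2⟩, fun h => ⟨h.1.2, h.2⟩⟩

theorem exists_interleaving (P : Finset β) (w : Fin t → β) (hw : ∀ k, w k ∈ P)
    (L : β → List α) (hL : ∀ S ∈ P, (L S).length = #{k | w k = S}) :
    ∃ σ : Fin t → α, (∀ k, σ k ∈ L (w k)) ∧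
      ∀ S ∈ P, ∀ u : Finset (Fin t), IsLowerSet (u : Set (Fin t)) →
        {l ∈ u | w l = S}.val.map σ = ((L S).take #{l ∈ u | w l = S} : Multiset α) := by
  have hrank : ∀ k, fiberRank w k < (L (w k)).length := fun k =>
    (hL _ (hw k)).symm ▸ fiberRank_lt_card w k
  obtain hα | ⟨⟨a₀⟩⟩ := isEmpty_or_nonempty α
  · have : IsEmpty (Fin t) := ⟨fun k => hα.false ((L (w k))[0]'(by have := hrank k; omega))⟩
    exact ⟨isEmptyElim, isEmptyElim, fun S _ u _ => by simp [eq_empty_of_isEmpty u]⟩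
  refine ⟨fun k => (L (w k)).getD (fiberRank w k) a₀, fun k => ?_, fun S hS u hu => ?_⟩
  · dsimp only
    rw [List.getD_eq_getElem _ _ (hrank k)]
    exact List.getElem_mem _
  set s := {l ∈ u | w l = S}
  have hs : #s ≤ (L S).length := hL S hS ▸ card_le_card (monotone_filter_left _ (subset_univ u))
  calc s.val.map (fun k => (L (w k)).getD (fiberRank w k) a₀)
      = ∑ l ∈ s, {(L S).getD (fiberRank w l) a₀} := by
        rw [← Multiset.sum_map_singleton (s.val.map _), Multiset.map_map]
        exact sum_congr rfl fun l hl => by simp only [Function.comp_apply, (mem_filter.mp hl).2]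
    _ = ∑ j ∈ range #s, {(L S).getD j a₀} :=
        sum_filter_fiberRank w hu S fun j => {(L S).getD j a₀}
    _ = ↑((L S).take #s) := by
        rw [List.sum_range_getD _ _ _ hs, ← Multiset.sum_coe, ← Multiset.map_coe,
          Multiset.sum_map_singleton]

end Interleaving

section Breakpoints

variable {𝕜 : Type*} [Field 𝕜] [LinearOrder 𝕜] [IsStrictOrderedRing 𝕜] [FloorSemiring 𝕜]

lemma card_filter_Icc_le (m : ℕ) {x : 𝕜} (hx : 0 ≤ x) :
    (#{r ∈ Icc 1 m | ((r : ℕ) : 𝕜) ≤ x} : 𝕜) ≤ x :=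
  calc (#{r ∈ Icc 1 m | ((r : ℕ) : 𝕜) ≤ x} : 𝕜) ≤ #(Icc 1 ⌊x⌋₊) := by
        refine Nat.cast_le.mpr (card_le_card fun r hr => ?_)
        obtain ⟨hr, hrx⟩ := mem_filter.mp hr
        exact mem_Icc.mpr ⟨(mem_Icc.mp hr).1, Nat.le_floor hrx⟩
    _ ≤ x := by simpa using Nat.floor_le hx

lemma sub_one_le_card_filter_Icc (m : ℕ) {x : 𝕜} (hx : x ≤ m) :
    x - 1 ≤ #{r ∈ Icc 1 m | ((r : ℕ) : 𝕜) < x} :=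
  calc x - 1 ≤ #(Ico 1 ⌈x⌉₊) := by
        rw [Nat.card_Ico]
        rcases Nat.eq_zero_or_pos ⌈x⌉₊ with h | h
        · linarith [Nat.ceil_eq_zero.mp h]
        · rw [Nat.cast_sub h, Nat.cast_one]
          linarith [Nat.le_ceil x]
    _ ≤ #{r ∈ Icc 1 m | ((r : ℕ) : 𝕜) < x} := by
        refine Nat.cast_le.mpr (card_le_card fun r hr => ?_)
        obtain ⟨hr₁, hrx⟩ := mem_Ico.mp hr
        have hrx : (r : 𝕜) < x := Nat.lt_ceil.mp hrx
        have : r ≤ m := by exact_mod_cast (hrx.trans_le hx).le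
        exact mem_filter.mpr ⟨mem_Icc.mpr ⟨hr₁, this⟩, hrx⟩

lemma floor_div_mul_cancel {r n : ℕ} (hr : r ∈ Icc 1 n) : ⌊(r : 𝕜) / n * n⌋₊ = r := by
  have : (n : 𝕜) ≠ 0 := Nat.cast_ne_zero.mpr (by have := mem_Icc.mp hr; omega)
  rw [div_mul_cancel₀ _ this, Nat.floor_natCast]

variable {β : Type*} [DecidableEq β] {t : ℕ} {P : Finset β} {m : β → ℕ} {w : Fin t → β}
  {q : Fin t → 𝕜}

variable (hw : ∀ k, w k ∈ P) (hbp : ∀ S ∈ P, ∀ r ∈ Icc 1 (m S), ∃! k, w k = S ∧ q k = r / m S)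
  (ht : t = ∑ S ∈ P, m S)
include hw hbp ht

theorem card_filter_eq_and_exists_eq_div_of_breakpoints :
    (∀ S ∈ P, #{k | w k = S} = m S) ∧ ∀ k, ∃ r ∈ Icc 1 (m (w k)), q k = r / m (w k) := by
  classical
  set bp : β → Finset (Fin t) := fun S => {k | w k = S ∧ ∃ r ∈ Icc 1 (m S), q k = r / m S}
  have hsub : ∀ S, bp S ⊆ ({k | w k = S} : Finset (Fin t)) := fun S k hk => by simp_all [bp]
  have hbp_le : ∀ S ∈ P, m S ≤ #(bp S) := fun S hS => by
    have := card_le_card_of_surjOn (s := bp S) (fun k => ⌊q k * m S⌋₊) fun r hr => by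
      obtain ⟨k, ⟨hk, hq⟩, -⟩ := hbp S hS r hr
      exact ⟨k, by simpa [bp] using ⟨hk, r, mem_Icc.mp hr, hq⟩,
        by simp only [hq, floor_div_mul_cancel hr]⟩
    simpa using this
  have hle : ∀ S ∈ P, m S ≤ #{k | w k = S} :=
    fun S hS => (hbp_le S hS).trans (card_le_card (hsub S))
  have hsum : ∑ S ∈ P, m S = ∑ S ∈ P, #{k | w k = S} := by
    rw [← ht, ← card_eq_sum_card_fiberwise fun k _ => hw k, card_univ, Fintype.card_fin]
  have hm := (sum_eq_sum_iff_of_le hle).mp hsum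
  refine ⟨fun S hS => (hm S hS).symm, fun k => ?_⟩
  -- the breakpoints of `w k` fill its whole fibre, which contains `k`
  have hfill := eq_of_subset_of_card_le (hsub (w k)) (hm _ (hw k) ▸ hbp_le _ (hw k))
  have hk : k ∈ bp (w k) := hfill ▸ by simp
  simpa [bp] using hk

lemma floor_mul_mem_Icc_of_breakpoints (l : Fin t) :
    ⌊q l * m (w l)⌋₊ ∈ Icc 1 (m (w l)) ∧ q l = ⌊q l * m (w l)⌋₊ / m (w l) := by
  obtain ⟨r, hr, hq⟩ := (card_filter_eq_and_exists_eq_div_of_breakpoints hw hbp ht).2 l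
  rw [hq, floor_div_mul_cancel hr]
  exact ⟨hr, rfl⟩

lemma mem_Icc_of_breakpoints (k : Fin t) : q k ∈ Set.Icc 0 1 := by
  obtain ⟨hr, hq⟩ := floor_mul_mem_Icc_of_breakpoints hw hbp ht k
  rw [hq]
  exact ⟨by positivity, div_le_one_of_le₀ (by exact_mod_cast (mem_Icc.mp hr).2) (by positivity)⟩

-- Both bounds compare the breakpoints `l ≤ k` of `S` with their ranks `⌊q l * m S⌋₊`.
lemma card_filter_Iic_le (hmono : Monotone q) {S : β} (hS : S ∈ P) (k : Fin t) :
    (#{l ∈ Iic k | w l = S} : 𝕜) ≤ q k * m S := by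
  have hrank : ∀ l, w l = S → ⌊q l * m S⌋₊ ∈ Icc 1 (m S) ∧ q l = ⌊q l * m S⌋₊ / m S :=
    fun l hl => hl ▸ floor_mul_mem_Icc_of_breakpoints hw hbp ht l
  refine le_trans (Nat.cast_le.mpr (card_le_card_of_injOn (fun l => ⌊q l * m S⌋₊)
    (fun l hl => ?_) fun l hl l' hl' h => ?_))
    (card_filter_Icc_le (m S) (mul_nonneg (mem_Icc_of_breakpoints hw hbp ht k).1 (by positivity)))
  · obtain ⟨hlk, hlS⟩ := mem_filter.mp hl
    obtain ⟨hr, hq⟩ := hrank l hlS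
    have hm : (0 : 𝕜) < m S := by have := mem_Icc.mp hr; exact_mod_cast (by omega : 0 < m S)
    refine mem_filter.mpr ⟨hr, ?_⟩
    rw [← div_le_iff₀ hm, ← hq]
    exact hmono (mem_Iic.mp hlk)
  · obtain ⟨-, hlS⟩ := mem_filter.mp hl
    obtain ⟨-, hl'S⟩ := mem_filter.mp hl'
    have h : ⌊q l * m S⌋₊ = ⌊q l' * m S⌋₊ := h
    exact (hbp S hS _ (hrank l hlS).1).unique ⟨hlS, (hrank l hlS).2⟩ ⟨hl'S, h ▸ (hrank l' hl'S).2⟩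

lemma sub_one_le_card_filter_Iic (hmono : Monotone q) {S : β} (hS : S ∈ P) (k : Fin t) :
    q k * m S - 1 ≤ #{l ∈ Iic k | w l = S} := by
  refine (sub_one_le_card_filter_Icc (m S)
    (mul_le_of_le_one_left (by positivity) (mem_Icc_of_breakpoints hw hbp ht k).2)).trans
    (Nat.cast_le.mpr (card_le_card_of_surjOn (fun l => ⌊q l * m S⌋₊) fun r hr => ?_))
  obtain ⟨hr, hrx⟩ := mem_filter.mp hr
  obtain ⟨l, ⟨hlS, hql⟩, -⟩ := hbp S hS r hr
  have hm : (0 : 𝕜) < m S := by have := mem_Icc.mp hr; exact_mod_cast (by omega : 0 < m S)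
  have : q l < q k := by rwa [hql, div_lt_iff₀ hm]
  exact ⟨l, mem_filter.mpr ⟨mem_Iic.mpr (hmono.reflect_lt this).le, hlS⟩,
    by simp only [hql, floor_div_mul_cancel hr]⟩

theorem abs_card_filter_Iic_sub_le (hmono : Monotone q) {S : β} (hS : S ∈ P) (k : Fin t) :
    |(#{l ∈ Iic k | w l = S} : 𝕜) - q k * m S| ≤ 1 :=
  abs_le.mpr ⟨by linarith [sub_one_le_card_filter_Iic hw hbp ht hmono hS k],
    by linarith [card_filter_Iic_le hw hbp ht hmono hS k]⟩

theorem exists_balanced_interleaving {α κ : Type*} [DecidableEq α] [Fintype κ]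
    (hmono : Monotone q) (M : β → Multiset α) (hM : ∀ S ∈ P, Multiset.card (M S) = m S)
    (v : α → κ → 𝕜) {B : 𝕜} (hB : 0 ≤ B) (hv : ∀ a r, |v a r| ≤ B) :
    ∃ σ : Fin t → α, (∀ k, σ k ∈ M (w k)) ∧ (∀ a, #{k | σ k = a} = ∑ S ∈ P, (M S).count a) ∧
      ∀ k r, |∑ l ∈ Iic k, v (σ l) r - q k * ∑ S ∈ P, ((M S).map (v · r)).sum| ≤
        (2 * Fintype.card κ + 1) * B * #P := by
  have hfiber := (card_filter_eq_and_exists_eq_div_of_breakpoints hw hbp ht).1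
  choose ord hord_coe hord using fun S => exists_list_abs_sum_take_sub_le (M S) v hB fun a _ => hv a
  have hlen : ∀ S ∈ P, (ord S).length = #{k | w k = S} := fun S hS => by
    rw [← Multiset.coe_card, hord_coe, hM S hS, hfiber S hS]
  obtain ⟨σ, hσ_mem, hσ⟩ := exists_interleaving P w hw ord hlen
  refine ⟨σ, fun k => hord_coe (w k) ▸ Multiset.mem_coe.mpr (hσ_mem k), fun a => ?_, fun k r => ?_⟩
  · rw [card_eq_sum_card_fiberwise fun k _ => hw k]
    refine sum_congr rfl fun S hS => ?_
    have hfull := hσ S hS univ (by simp [isLowerSet_univ])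
    rw [← hlen S hS, List.take_length, hord_coe] at hfull
    rw [← hfull, Multiset.count_map, ← filter_val, card_val, filter_filter, filter_filter]
    simp only [eq_comm, and_comm]
  · rw [← sum_fiberwise_of_maps_to fun l _ => hw l, mul_sum, ← sum_sub_distrib]
    refine (abs_sum_le_sum_abs _ _).trans <| (sum_le_sum fun S hS => ?_).trans_eq
      (by rw [sum_const, nsmul_eq_mul, mul_comm])
    set c := #{l ∈ Iic k | w l = S}
    have hc : c ≤ Multiset.card (M S) :=
      hM S hS ▸ hfiber S hS ▸ card_le_card (monotone_filter_left _ (subset_univ _))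
    have hprefix : ∑ l ∈ Iic k with w l = S, v (σ l) r = (((ord S).take c).map (v · r)).sum := by
      rw [← Multiset.sum_coe, ← Multiset.map_coe, ← hσ S hS _ (by simpa using isLowerSet_Iic k),
        Multiset.map_map]
      rfl
    have hcq := abs_card_filter_Iic_sub_le hw hbp ht hmono hS k
    rw [← hM S hS] at hcq
    rw [hprefix, add_mul, one_mul]
    exact abs_sub_mul_le_add hB (hord S c hc r) (Multiset.abs_sum_map_le _ fun a _ => hv a r) hcq

end Breakpoints

theorem multichoice_path_exists_general
    (d n Δ : ℕ)
    (A : Fin d → Fin n → ℤ)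
    (hA : ∀ (r : Fin d) (i : Fin n), |A r i| ≤ (Δ : ℤ))
    (P : Finset (Finset (Fin n)))
    (hP : ∀ i : Fin n, ∃! S : Finset (Fin n), S ∈ P ∧ i ∈ S)
    (tS : Finset (Fin n) → ℕ)
    (t : ℕ) (ht : t = ∑ S ∈ P, tS S)
    (x : Fin n → ℕ)
    (hx : ∀ S ∈ P, ∑ i ∈ S, x i = tS S)
    (b : Fin d → ℤ)
    (hb : ∀ r : Fin d, b r = ∑ i, A r i * x i)
    -- the breakpoint sequence
    (Sseq : Fin t → Finset (Fin n)) (hSseq : ∀ k : Fin t, Sseq k ∈ P)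
    (dseq : Fin t → ℚ) (hmono : Monotone dseq)
    (hbp : ∀ S ∈ P, ∀ r ∈ Finset.Icc 1 (tS S),
      ∃! k : Fin t, Sseq k = S ∧ dseq k = (r : ℚ) / (tS S : ℚ)) :
    ∃ σ : Fin t → Fin n,
      (∀ k : Fin t, σ k ∈ Sseq k) ∧
      (∀ i : Fin n, (Finset.univ.filter (fun k : Fin t => σ k = i)).card = x i) ∧
      (∀ k : Fin t, ∀ r : Fin d,
        |((∑ l ∈ Finset.Iic k, A r (σ l) : ℤ) : ℚ) - dseq k * (b r : ℚ)|
          ≤ 4 * d * Δ * P.card) := by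
  obtain ⟨σ, hσ_mem, hσ_count, hσ_bound⟩ := exists_balanced_interleaving hSseq hbp ht hmono
    (fun S => S.withMultiplicity x) (fun S hS => by rw [card_withMultiplicity, hx S hS])
    (fun i (r : Fin d) => (A r i : ℚ)) (Nat.cast_nonneg Δ) fun i r => by exact_mod_cast hA r i
  refine ⟨σ, fun k => mem_of_mem_withMultiplicity (hσ_mem k), fun i => ?_, fun k r => ?_⟩
  · rw [hσ_count]
    simp_rw [count_withMultiplicity, ← sum_ite_eq', sum_sum_of_existsUnique_mem hP]
    simp
  · have hb' : (b r : ℚ) = ∑ S ∈ P, ((S.withMultiplicity x).map fun i => (A r i : ℚ)).sum := by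
      simp_rw [sum_map_withMultiplicity, sum_sum_of_existsUnique_mem hP, hb r]
      push_cast
      simp [mul_comm]
    have hd : (1 : ℚ) ≤ d := by exact_mod_cast r.pos
    push_cast
    rw [hb']
    refine (hσ_bound k r).trans ?_
    rw [Fintype.card_fin]
    nlinarith [mul_nonneg (Nat.cast_nonneg (α := ℚ) #P) (Nat.cast_nonneg (α := ℚ) Δ)]

/-- Existence of an increment sequence for Multi-Choice Integer Programming
following a balanced breakpoint sequence, whose partial right-hand sides stay
within `4dΔ|P|` (in infinity norm) of `d_k · b`. -/
theorem multichoice_path_exists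
    (d n Δ : ℕ) (hd : 1 ≤ d) (hΔ : 1 ≤ Δ)
    (A : Fin d → Fin n → ℤ)
    (hA : ∀ (r : Fin d) (i : Fin n), |A r i| ≤ (Δ : ℤ))
    (P : Finset (Finset (Fin n)))
    (hP : ∀ i : Fin n, ∃! S : Finset (Fin n), S ∈ P ∧ i ∈ S)
    (tS : Finset (Fin n) → ℕ) (htS : ∀ S ∈ P, 1 ≤ tS S)
    (t : ℕ) (ht : t = ∑ S ∈ P, tS S)
    (x : Fin n → ℕ)
    (hx : ∀ S ∈ P, ∑ i ∈ S, x i = tS S)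
    (b : Fin d → ℤ)
    (hb : ∀ r : Fin d, b r = ∑ i, A r i * x i)
    -- the breakpoint sequence
    (Sseq : Fin t → Finset (Fin n)) (hSseq : ∀ k : Fin t, Sseq k ∈ P)
    (dseq : Fin t → ℚ) (hmono : Monotone dseq)
    (hbp : ∀ S ∈ P, ∀ r ∈ Finset.Icc 1 (tS S),
      ∃! k : Fin t, Sseq k = S ∧ dseq k = (r : ℚ) / (tS S : ℚ)) :
    ∃ σ : Fin t → Fin n,
      (∀ k : Fin t, σ k ∈ Sseq k) ∧
      (∀ i : Fin n, (Finset.univ.filter (fun k : Fin t => σ k = i)).card = x i) ∧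
      (∀ k : Fin t, ∀ r : Fin d,
        |((∑ l ∈ Finset.Iic k, A r (σ l) : ℤ) : ℚ) - dseq k * (b r : ℚ)|
          ≤ 4 * d * Δ * P.card) :=
  multichoice_path_exists_general d n Δ A hA P hP tS t ht x hx b hb Sseq hSseq dseq hmono hbp
end

section
/- Let a ∈ {p_1,…,p_n} and suppose B ≠ ∅. The relaxed system — binary variables x_{ij} with (1') ∑_j p_j x_{ij} = T_i for all i ∈ S, (2') ∑_j p_j x_{ij} ≡ T_i (mod a) for all i ∈ B, (3') ∑_{j : p_j = a} ∑_{i∈S} x_{ij} ≤ |{j : p_j = a}| − p_max^2·|B|, and (4') ∑_{i=1}^m x_{ij} ≤ 1 for all j — has a feasible solution if and only if mod-IP(a) has a feasible solution. Moreover, for any solution x of the relaxed system, the total processing time ∑_{j unassigned} p_j of the jobs j with ∑_i x_{ij} = 0 is divisible by a. -/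
/-- `x` is a feasible binary solution of mod-IP(a). -/
def ModIPSol (n m : ℕ) (p : Fin n → ℕ) (T : Fin m → ℕ) (pmax a : ℕ)
    (x : Fin m → Fin n → ℕ) : Prop :=
  (∀ i j, x i j ≤ 1) ∧
  (∀ i : Fin m, T i < pmax ^ 4 → ∑ j, p j * x i j = T i) ∧
  (∀ i : Fin m, pmax ^ 4 ≤ T i → ∑ j, p j * x i j ≡ T i [MOD a]) ∧
  (pmax ^ 2 * (Finset.univ.filter (fun i : Fin m => pmax ^ 4 ≤ T i)).card ≤
    ∑ j ∈ Finset.univ.filter (fun j => p j = a),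
      ∑ i ∈ Finset.univ.filter (fun i : Fin m => pmax ^ 4 ≤ T i), x i j) ∧
  (∀ j : Fin n, ∑ i, x i j = 1)

/-- `x` is a feasible binary solution of the relaxed system, in which jobs may
stay unassigned and the pivot constraint is put on the small machines:
the jobs of size `a` on small machines number at most
`|{j : p_j = a}| − p_max²·|B|`. -/
def RelaxedSol (n m : ℕ) (p : Fin n → ℕ) (T : Fin m → ℕ) (pmax a : ℕ)
    (x : Fin m → Fin n → ℕ) : Prop :=
  (∀ i j, x i j ≤ 1) ∧
  (∀ i : Fin m, T i < pmax ^ 4 → ∑ j, p j * x i j = T i) ∧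
  (∀ i : Fin m, pmax ^ 4 ≤ T i → ∑ j, p j * x i j ≡ T i [MOD a]) ∧
  ((∑ j ∈ Finset.univ.filter (fun j => p j = a),
      ∑ i ∈ Finset.univ.filter (fun i : Fin m => T i < pmax ^ 4), x i j)
    + pmax ^ 2 * (Finset.univ.filter (fun i : Fin m => pmax ^ 4 ≤ T i)).card ≤
      (Finset.univ.filter (fun j : Fin n => p j = a)).card) ∧
  (∀ j : Fin n, ∑ i, x i j ≤ 1)

lemma modEq_sum_aux {ι : Type*} (s : Finset ι) (f g : ι → ℕ) (a : ℕ)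
    (h : ∀ i ∈ s, f i ≡ g i [MOD a]) :
    ∑ i ∈ s, f i ≡ ∑ i ∈ s, g i [MOD a] := by
  unfold Nat.ModEq
  rw [Finset.sum_nat_mod, Finset.sum_nat_mod s a g]
  congr 1
  exact Finset.sum_congr rfl h

/-- If there is at least one big machine, the relaxed system is feasible iff
mod-IP(a) is feasible; moreover, in any solution of the relaxed system the
total processing time of the unassigned jobs is divisible by `a`. -/
theorem relaxed_iff_modIP_and_unassigned_divisible
    (n m : ℕ) (hm : 1 ≤ m) (hmn : m ≤ n)
    (p : Fin n → ℕ) (hp : ∀ j, 0 < p j)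
    (T : Fin m → ℕ)
    (hsum : ∑ j, p j = ∑ i, T i)
    (pmax : ℕ) (hpmax : pmax = Finset.univ.sup p)
    (a : ℕ) (ha : ∃ j : Fin n, p j = a)
    (hB : (Finset.univ.filter (fun i : Fin m => pmax ^ 4 ≤ T i)).Nonempty) :
    ((∃ x, RelaxedSol n m p T pmax a x) ↔ (∃ x, ModIPSol n m p T pmax a x)) ∧
    (∀ x, RelaxedSol n m p T pmax a x →
      a ∣ ∑ j ∈ Finset.univ.filter (fun j : Fin n => ∑ i, x i j = 0), p j) := by
  obtain ⟨i0, hi0m⟩ := hB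
  have hi0 : pmax ^ 4 ≤ T i0 := (Finset.mem_filter.mp hi0m).2
  -- splitting machines into big and small
  have hSeq : Finset.univ.filter (fun i : Fin m => ¬ pmax ^ 4 ≤ T i)
      = Finset.univ.filter (fun i : Fin m => T i < pmax ^ 4) := by
    ext i; simp [not_le]
  have hsplit : ∀ f : Fin m → ℕ, ∑ i, f i
      = (∑ i ∈ Finset.univ.filter (fun i : Fin m => pmax ^ 4 ≤ T i), f i)
        + ∑ i ∈ Finset.univ.filter (fun i : Fin m => T i < pmax ^ 4), f i := by
    intro f
    rw [← hSeq, Finset.sum_filter_add_sum_filter_not]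
  -- the divisibility statement
  have hdiv : ∀ x : Fin m → Fin n → ℕ, RelaxedSol n m p T pmax a x →
      a ∣ ∑ j ∈ Finset.univ.filter (fun j : Fin n => ∑ i, x i j = 0), p j := by
    intro x hx
    obtain ⟨hx1, hx2, hx3, hx4, hx5⟩ := hx
    have key : (∑ j ∈ Finset.univ.filter (fun j : Fin n => ∑ i, x i j = 0), p j)
        + ∑ i, ∑ j, p j * x i j = ∑ i, T i := by
      rw [← hsum]
      have hc : (∑ i, ∑ j, p j * x i j) = ∑ j, ∑ i, p j * x i j := Finset.sum_comm
      rw [hc, Finset.sum_filter, ← Finset.sum_add_distrib]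
      refine Finset.sum_congr rfl fun j _ => ?_
      rw [← Finset.mul_sum]
      rcases Nat.le_one_iff_eq_zero_or_eq_one.mp (hx5 j) with h | h <;> simp [h]
    have k1 : ∑ i, ∑ j, p j * x i j
        = (∑ i ∈ Finset.univ.filter (fun i : Fin m => pmax ^ 4 ≤ T i), ∑ j, p j * x i j)
          + ∑ i ∈ Finset.univ.filter (fun i : Fin m => T i < pmax ^ 4), ∑ j, p j * x i j :=
      hsplit _
    have k2 : ∑ i, T i
        = (∑ i ∈ Finset.univ.filter (fun i : Fin m => pmax ^ 4 ≤ T i), T i)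
          + ∑ i ∈ Finset.univ.filter (fun i : Fin m => T i < pmax ^ 4), T i := hsplit T
    have k3 : ∑ i ∈ Finset.univ.filter (fun i : Fin m => T i < pmax ^ 4), ∑ j, p j * x i j
        = ∑ i ∈ Finset.univ.filter (fun i : Fin m => T i < pmax ^ 4), T i :=
      Finset.sum_congr rfl fun i hi => hx2 i (Finset.mem_filter.mp hi).2
    have key2 : (∑ j ∈ Finset.univ.filter (fun j : Fin n => ∑ i, x i j = 0), p j)
        + (∑ i ∈ Finset.univ.filter (fun i : Fin m => pmax ^ 4 ≤ T i), ∑ j, p j * x i j)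
        = ∑ i ∈ Finset.univ.filter (fun i : Fin m => pmax ^ 4 ≤ T i), T i := by
      omega
    have hmod : (∑ i ∈ Finset.univ.filter (fun i : Fin m => pmax ^ 4 ≤ T i), ∑ j, p j * x i j)
        ≡ ∑ i ∈ Finset.univ.filter (fun i : Fin m => pmax ^ 4 ≤ T i), T i [MOD a] :=
      modEq_sum_aux _ _ _ _ fun i hi => hx3 i (Finset.mem_filter.mp hi).2
    have hU : (∑ j ∈ Finset.univ.filter (fun j : Fin n => ∑ i, x i j = 0), p j) ≡ 0 [MOD a] := by
      have h2 : (∑ j ∈ Finset.univ.filter (fun j : Fin n => ∑ i, x i j = 0), p j)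
          + (∑ i ∈ Finset.univ.filter (fun i : Fin m => pmax ^ 4 ≤ T i), ∑ j, p j * x i j)
          ≡ 0 + (∑ i ∈ Finset.univ.filter (fun i : Fin m => pmax ^ 4 ≤ T i), ∑ j, p j * x i j)
          [MOD a] := by
        rw [key2, zero_add]
        exact hmod.symm
      exact Nat.ModEq.add_right_cancel' _ h2
    exact Nat.modEq_zero_iff_dvd.mp hU
  refine ⟨⟨?_, ?_⟩, hdiv⟩
  · -- relaxed → mod-IP
    rintro ⟨x, hx⟩
    have hdivx := hdiv x hx
    obtain ⟨hx1, hx2, hx3, hx4, hx5⟩ := hx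
    set y : Fin m → Fin n → ℕ :=
      fun i j => if ∑ i', x i' j = 0 then (if i = i0 then 1 else 0) else x i j with hy
    have hzero : ∀ j, (∑ i', x i' j = 0) → ∀ i, x i j = 0 := fun j h i =>
      (Finset.sum_eq_zero_iff).mp h i (Finset.mem_univ i)
    have hyval0 : ∀ j, (∑ i', x i' j = 0) → ∀ i, y i j = if i = i0 then 1 else 0 := by
      intro j h i
      simp only [hy]
      rw [if_pos h]
    have hyval1 : ∀ j, ¬(∑ i', x i' j = 0) → ∀ i, y i j = x i j := by
      intro j h i
      simp only [hy]
      rw [if_neg h]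
    have hyne : ∀ i, i ≠ i0 → ∀ j, y i j = x i j := by
      intro i hi j
      by_cases h : ∑ i', x i' j = 0
      · rw [hyval0 j h i, if_neg hi, hzero j h i]
      · exact hyval1 j h i
    have hysum : ∀ j, ∑ i, y i j = 1 := by
      intro j
      by_cases h : ∑ i', x i' j = 0
      · rw [Finset.sum_congr rfl fun i _ => hyval0 j h i]
        simp
      · rw [Finset.sum_congr rfl fun i _ => hyval1 j h i]
        have := hx5 j
        omega
    refine ⟨y, fun i j => ?_, fun i hi => ?_, fun i hi => ?_, ?_, hysum⟩
    · by_cases h : ∑ i', x i' j = 0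
      · rw [hyval0 j h i]
        split_ifs <;> omega
      · rw [hyval1 j h i]
        exact hx1 i j
    · have hne : i ≠ i0 := fun he => by subst he; omega
      calc ∑ j, p j * y i j = ∑ j, p j * x i j :=
            Finset.sum_congr rfl fun j _ => by rw [hyne i hne j]
        _ = T i := hx2 i hi
    · by_cases he : i = i0
      · rw [he] at hi ⊢
        have hload : ∑ j, p j * y i0 j
            = ∑ j, p j * x i0 j
              + ∑ j ∈ Finset.univ.filter (fun j : Fin n => ∑ i, x i j = 0), p j := by
          rw [Finset.sum_filter, ← Finset.sum_add_distrib]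
          refine Finset.sum_congr rfl fun j _ => ?_
          by_cases h : ∑ i', x i' j = 0
          · rw [hyval0 j h i0, if_pos rfl, if_pos h, hzero j h i0]
            ring
          · rw [hyval1 j h i0, if_neg h, add_zero]
        rw [hload]
        have h0 : (∑ j ∈ Finset.univ.filter (fun j : Fin n => ∑ i, x i j = 0), p j)
            ≡ 0 [MOD a] := Nat.modEq_zero_iff_dvd.mpr hdivx
        have h2 := Nat.ModEq.add_left (∑ j, p j * x i0 j) h0
        rw [add_zero] at h2
        exact h2.trans (hx3 i0 hi)
      · have hEq : ∑ j, p j * y i j = ∑ j, p j * x i j :=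
          Finset.sum_congr rfl fun j _ => by rw [hyne i he j]
        rw [hEq]; exact hx3 i hi
    · -- pivot constraint
      have hperj : ∀ j : Fin n,
          (∑ i ∈ Finset.univ.filter (fun i : Fin m => pmax ^ 4 ≤ T i), y i j)
          + (∑ i ∈ Finset.univ.filter (fun i : Fin m => T i < pmax ^ 4), x i j) = 1 := by
        intro j
        have h1 : ∑ i ∈ Finset.univ.filter (fun i : Fin m => T i < pmax ^ 4), x i j
            = ∑ i ∈ Finset.univ.filter (fun i : Fin m => T i < pmax ^ 4), y i j :=
          Finset.sum_congr rfl fun i hi =>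
            (hyne i (fun he => by
              have h2 := (Finset.mem_filter.mp hi).2
              rw [he] at h2
              omega) j).symm
        rw [h1, ← hsplit (fun i => y i j)]
        exact hysum j
      have hsum2 :
          (∑ j ∈ Finset.univ.filter (fun j : Fin n => p j = a),
            ∑ i ∈ Finset.univ.filter (fun i : Fin m => pmax ^ 4 ≤ T i), y i j)
          + (∑ j ∈ Finset.univ.filter (fun j : Fin n => p j = a),
            ∑ i ∈ Finset.univ.filter (fun i : Fin m => T i < pmax ^ 4), x i j)
          = (Finset.univ.filter (fun j : Fin n => p j = a)).card := by
        rw [← Finset.sum_add_distrib, Finset.card_eq_sum_ones]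
        exact Finset.sum_congr rfl fun j _ => hperj j
      omega
  · -- mod-IP → relaxed
    rintro ⟨x, hx⟩
    obtain ⟨hx1, hx2, hx3, hx4, hx5⟩ := hx
    refine ⟨x, hx1, hx2, hx3, ?_, fun j => (hx5 j).le⟩
    have hperj : ∀ j : Fin n,
        (∑ i ∈ Finset.univ.filter (fun i : Fin m => T i < pmax ^ 4), x i j)
        + (∑ i ∈ Finset.univ.filter (fun i : Fin m => pmax ^ 4 ≤ T i), x i j) = 1 := by
      intro j
      have h1 := hsplit (fun i => x i j)
      have h2 := hx5 j
      omega
    have hsum2 :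
        (∑ j ∈ Finset.univ.filter (fun j : Fin n => p j = a),
          ∑ i ∈ Finset.univ.filter (fun i : Fin m => T i < pmax ^ 4), x i j)
        + (∑ j ∈ Finset.univ.filter (fun j : Fin n => p j = a),
          ∑ i ∈ Finset.univ.filter (fun i : Fin m => pmax ^ 4 ≤ T i), x i j)
        = (Finset.univ.filter (fun j : Fin n => p j = a)).card := by
      rw [← Finset.sum_add_distrib, Finset.card_eq_sum_ones]
      exact Finset.sum_congr rfl fun j _ => hperj j
    omega
end
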